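/- arXiv:2508.21274 — 10 statements merged into one kernel-verified Lean document; each statement's English description precedes it below -/
import Mathlib

section
/- The limit lim_{n→∞} (π e)^{2n} |B_{2n}| / n^{2n + 1/2} = 4√π holds, where B_{2n} is the 2n-th Bernoulli number. -/
open Real Filter

/-- The sum `∑ 1/m^(2k)` (i.e. `ζ(2k)`). -/
noncomputable def zetaEven (k : ℕ) : ℝ := ∑' m : ℕ, 1 / (m : ℝ) ^ (2 * k)

lemma one_le_zetaEven {k : ℕ} (hk : k ≠ 0) : 1 ≤ zetaEven k := by
  have h : HasSum (fun m : ℕ => 1 / (m : ℝ) ^ (2 * k)) (zetaEven k) :=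
    (hasSum_zeta_nat hk).summable.hasSum
  have h1 : (1 : ℝ) / ((1 : ℕ) : ℝ) ^ (2 * k) ≤ zetaEven k :=
    le_hasSum h 1 (fun j _ => by positivity)
  simpa using h1

lemma zetaEven_le {k : ℕ} (hk : 1 ≤ k) :
    zetaEven k ≤ 1 + 4 * (1 / 4 : ℝ) ^ k * (π ^ 2 / 6 - 1) := by
  classical
  have h : HasSum (fun m : ℕ => 1 / (m : ℝ) ^ (2 * k)) (zetaEven k) :=
    (hasSum_zeta_nat (Nat.one_le_iff_ne_zero.mp hk)).summable.hasSum
  set c : ℝ := 4 * (1 / 4 : ℝ) ^ k with hc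
  have h2 : HasSum (fun m : ℕ => c * (1 / (m : ℝ) ^ 2)) (c * (π ^ 2 / 6)) :=
    hasSum_zeta_two.mul_left c
  have h3 : HasSum (Function.update (fun m : ℕ => c * (1 / (m : ℝ) ^ 2)) 1 1)
      (1 - (fun m : ℕ => c * (1 / (m : ℝ) ^ 2)) 1 + c * (π ^ 2 / 6)) := h2.update 1 1
  have hle : ∀ m : ℕ, 1 / (m : ℝ) ^ (2 * k)
      ≤ Function.update (fun m : ℕ => c * (1 / (m : ℝ) ^ 2)) 1 1 m := by
    intro m
    rcases eq_or_ne m 1 with rfl | hm1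
    · simp
    rw [Function.update_of_ne hm1]
    rcases Nat.eq_zero_or_pos m with rfl | hm0
    · rw [Nat.cast_zero, zero_pow (by omega : 2 * k ≠ 0)]
      simp
    have hm2 : 2 ≤ m := by omega
    have hmR : (2 : ℝ) ≤ (m : ℝ) := by exact_mod_cast hm2
    rw [mul_one_div, div_le_div_iff₀ (by positivity) (by positivity)]
    have key : (m : ℝ) ^ 2 ≤ c * (m : ℝ) ^ (2 * k) := by
      have h4 : c * (m : ℝ) ^ (2 * k) = 4 * ((m : ℝ) ^ 2 / 4) ^ k := by
        rw [hc, div_pow, pow_mul, one_pow, div_pow]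
        ring
      have h5 : (1 : ℝ) ≤ (m : ℝ) ^ 2 / 4 := by nlinarith
      have h6 : ((m : ℝ) ^ 2 / 4) ^ 1 ≤ ((m : ℝ) ^ 2 / 4) ^ k :=
        pow_le_pow_right₀ h5 hk
      rw [h4]
      rw [pow_one] at h6
      linarith
    calc 1 * (m : ℝ) ^ 2 = (m : ℝ) ^ 2 := one_mul _
      _ ≤ c * (m : ℝ) ^ (2 * k) := key
  calc zetaEven k ≤ _ := hasSum_le hle h h3
    _ = 1 + c * (π ^ 2 / 6 - 1) := by norm_num; ring

lemma zetaEven_tendsto : Tendsto zetaEven atTop (nhds 1) := by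
  have hub : Tendsto (fun k : ℕ => 1 + 4 * (1 / 4 : ℝ) ^ k * (π ^ 2 / 6 - 1))
      atTop (nhds 1) := by
    have h0 : Tendsto (fun k : ℕ => (1 / 4 : ℝ) ^ k) atTop (nhds 0) :=
      tendsto_pow_atTop_nhds_zero_of_lt_one (by norm_num) (by norm_num)
    have := ((h0.const_mul 4).mul_const (π ^ 2 / 6 - 1)).const_add 1
    simpa using this
  refine tendsto_of_tendsto_of_tendsto_of_le_of_le' tendsto_const_nhds hub ?_ ?_
  · filter_upwards [eventually_ge_atTop 1] with k hk
    exact one_le_zetaEven (by omega)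
  · filter_upwards [eventually_ge_atTop 1] with k hk
    exact zetaEven_le hk

/-- Key identity: for `n ≥ 1` the quantity equals `4 * ζ(2n) * stirlingSeq (2n)`. -/
lemma bernoulli_ratio_eq {n : ℕ} (hn : 1 ≤ n) :
    (π * Real.exp 1) ^ (2 * n) * |((bernoulli (2 * n) : ℚ) : ℝ)|
        / (n : ℝ) ^ (2 * (n : ℝ) + 1 / 2)
      = 4 * zetaEven n * Stirling.stirlingSeq (2 * n) := by
  have hn0 : (0 : ℝ) < (n : ℝ) := by exact_mod_cast hn
  have h : HasSum (fun m : ℕ => 1 / (m : ℝ) ^ (2 * n))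
      ((-1 : ℝ) ^ (n + 1) * (2 : ℝ) ^ (2 * n - 1) * π ^ (2 * n) *
        bernoulli (2 * n) / (2 * n).factorial) := hasSum_zeta_nat (by omega)
  have hZ : zetaEven n = (-1 : ℝ) ^ (n + 1) * (2 : ℝ) ^ (2 * n - 1) * π ^ (2 * n) *
      bernoulli (2 * n) / (2 * n).factorial := h.tsum_eq
  -- express |B_{2n}| via zetaEven
  have hfac : (0 : ℝ) < (2 * n).factorial := by exact_mod_cast Nat.factorial_pos (2*n)
  have hpi0 : (0 : ℝ) < π := Real.pi_pos
  have hzpos : (0 : ℝ) ≤ zetaEven n := le_trans zero_le_one (one_le_zetaEven (by omega))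
  have hBabs : |((bernoulli (2 * n) : ℚ) : ℝ)|
      = zetaEven n * (2 * n).factorial / ((2 : ℝ) ^ (2 * n - 1) * π ^ (2 * n)) := by
    have h1 : zetaEven n = (2 : ℝ) ^ (2 * n - 1) * π ^ (2 * n) *
        |((bernoulli (2 * n) : ℚ) : ℝ)| / (2 * n).factorial := by
      calc zetaEven n = |zetaEven n| := (abs_of_nonneg hzpos).symm
        _ = |(-1 : ℝ) ^ (n + 1) * (2 : ℝ) ^ (2 * n - 1) * π ^ (2 * n) *
            ((bernoulli (2 * n) : ℚ) : ℝ) / (2 * n).factorial| := by rw [hZ]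
        _ = (2 : ℝ) ^ (2 * n - 1) * π ^ (2 * n) *
            |((bernoulli (2 * n) : ℚ) : ℝ)| / (2 * n).factorial := by
          rw [abs_div, abs_mul, abs_mul, abs_mul, abs_pow, abs_neg, abs_one, one_pow,
            one_mul, abs_of_nonneg (by positivity : (0:ℝ) ≤ (2:ℝ) ^ (2 * n - 1)),
            abs_of_nonneg (by positivity : (0:ℝ) ≤ π ^ (2 * n)),
            abs_of_nonneg hfac.le]
    rw [h1]
    field_simp
  -- stirlingSeq at 2n
  have hst : Stirling.stirlingSeq (2 * n)
      = (2 * n).factorial / (Real.sqrt (2 * (2 * n) : ℝ) * ((2 * n : ℝ) / Real.exp 1) ^ (2 * n)) := by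
    rw [Stirling.stirlingSeq]
    push_cast
    ring_nf
  -- rpow splitting
  have hrpow : (n : ℝ) ^ (2 * (n : ℝ) + 1 / 2)
      = (n : ℝ) ^ (2 * n) * Real.sqrt n := by
    rw [Real.rpow_add hn0, Real.sqrt_eq_rpow]
    congr 1
    rw [show (2 * (n : ℝ)) = ((2 * n : ℕ) : ℝ) by push_cast; ring, Real.rpow_natCast]
  have hsqrt4 : Real.sqrt (2 * (2 * n) : ℝ) = 2 * Real.sqrt n := by
    rw [show (2 * (2 * n) : ℝ) = 4 * n by push_cast; ring,
      show (4 : ℝ) * n = 2 ^ 2 * n by norm_num, Real.sqrt_mul (by positivity),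
      Real.sqrt_sq (by norm_num)]
  have hexp : (0 : ℝ) < Real.exp 1 := Real.exp_pos 1
  have hsqn : (0 : ℝ) < Real.sqrt n := Real.sqrt_pos.mpr hn0
  have hfac : (0 : ℝ) < (2 * n).factorial := by exact_mod_cast Nat.factorial_pos (2*n)
  have hpi : (0 : ℝ) < π := Real.pi_pos
  have h2n1 : (2 : ℝ) ^ (2 * n - 1) = 2 ^ (2 * n) / 2 := by
    rw [eq_div_iff (two_ne_zero)]
    rw [← pow_succ]
    congr 1
    omega
  rw [hBabs, hst, hrpow, hsqrt4, h2n1]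
  rw [div_pow, mul_pow (2 : ℝ) ((n : ℝ)), mul_pow (π) (Real.exp 1)]
  field_simp
  ring

/-- The limit `lim_{n→∞} (π e)^(2n) * |B_{2n}| / n^(2n + 1/2) = 4√π`, where `B_{2n}` is the
`2n`-th Bernoulli number. -/
theorem tendsto_bernoulli_even_ratio :
    Tendsto (fun n : ℕ =>
        (π * Real.exp 1) ^ (2 * n) * |((bernoulli (2 * n) : ℚ) : ℝ)|
          / (n : ℝ) ^ (2 * (n : ℝ) + 1 / 2))
      atTop (nhds (4 * Real.sqrt π)) := by
  have h2n : Tendsto (fun n : ℕ => 2 * n) atTop atTop :=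
    tendsto_atTop_mono (fun n => Nat.le_mul_of_pos_left n (by norm_num)) tendsto_id
  have h1 : Tendsto (fun n : ℕ => 4 * zetaEven n * Stirling.stirlingSeq (2 * n))
      atTop (nhds (4 * 1 * Real.sqrt π)) :=
    (zetaEven_tendsto.const_mul 4).mul (Stirling.tendsto_stirlingSeq_sqrt_pi.comp h2n)
  rw [show (4 : ℝ) * 1 * Real.sqrt π = 4 * Real.sqrt π by ring] at h1
  refine h1.congr' ?_
  filter_upwards [eventually_ge_atTop 1] with n hn
  exact (bernoulli_ratio_eq hn).symm
end

section
/- For every s > 0 and every natural number j, the L² norm of C_j over [−s,s]² satisfies ( ∫_{−s}^{s} ∫_{−s}^{s} C_j(x,y)² dx dy )^{1/2} ≤ √(2s) · (π s)^j / (2j + 1). -/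
open Real MeasureTheory

/-- The kernel function `C_j(x,y) = (1/√(2s)) · cos(π x y / s) · (π x y / s)^j`. -/
noncomputable def Ckernel (s : ℝ) (j : ℕ) (x y : ℝ) : ℝ :=
  (1 / Real.sqrt (2 * s)) * Real.cos (π * x * y / s) * (π * x * y / s) ^ j

lemma inner_bound (s : ℝ) (hs : 0 < s) (j : ℕ) (y : ℝ) :
    (∫ x in (-s)..s, (Ckernel s j x y) ^ 2) ≤
      (π * y / s) ^ (2 * j) * (s ^ (2 * j) / (2 * j + 1)) := by
  have hmono : ∀ x ∈ Set.uIcc (-s) s, (Ckernel s j x y) ^ 2 ≤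
      (1 / (2 * s)) * ((π * y / s) * x) ^ (2 * j) := by
    intro x _
    have hC : (Ckernel s j x y) ^ 2
        = (1 / (2 * s)) * (Real.cos (π * x * y / s)) ^ 2 * ((π * y / s) * x) ^ (2 * j) := by
      unfold Ckernel
      rw [show (π * y / s) * x = π * x * y / s by ring]
      rw [pow_mul]
      rw [mul_pow, mul_pow, div_pow, one_pow, Real.sq_sqrt (by positivity)]
      ring
    rw [hC]
    have h1 : (Real.cos (π * x * y / s)) ^ 2 ≤ 1 := Real.cos_sq_le_one _
    have h2 : (0:ℝ) ≤ ((π * y / s) * x) ^ (2 * j) := (even_two_mul j).pow_nonneg _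
    have h3 : (Real.cos (π * x * y / s)) ^ 2 * ((π * y / s) * x) ^ (2 * j)
        ≤ ((π * y / s) * x) ^ (2 * j) := by
      simpa using mul_le_mul_of_nonneg_right h1 h2
    rw [mul_assoc]
    exact mul_le_mul_of_nonneg_left h3 (by positivity)
  have hint1 : IntervalIntegrable (fun x => (Ckernel s j x y) ^ 2) volume (-s) s := by
    apply Continuous.intervalIntegrable
    unfold Ckernel
    fun_prop
  have hint2 : IntervalIntegrable (fun x => (1 / (2 * s)) * ((π * y / s) * x) ^ (2 * j))
      volume (-s) s := by
    apply Continuous.intervalIntegrable; fun_prop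
  calc (∫ x in (-s)..s, (Ckernel s j x y) ^ 2)
      ≤ ∫ x in (-s)..s, (1 / (2 * s)) * ((π * y / s) * x) ^ (2 * j) :=
        intervalIntegral.integral_mono_on (by linarith) hint1 hint2
          (fun x hx => hmono x (Set.mem_uIcc_of_le (by linarith [hx.1]) hx.2))
    _ = (π * y / s) ^ (2 * j) * (s ^ (2 * j) / (2 * j + 1)) := by
        have : ∀ x : ℝ, (1 / (2 * s)) * ((π * y / s) * x) ^ (2 * j)
            = (1 / (2 * s)) * (π * y / s) ^ (2 * j) * x ^ (2 * j) := by
          intro x; rw [mul_pow]; ring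
        simp_rw [this]
        rw [intervalIntegral.integral_const_mul, integral_pow]
        have hodd : Odd (2 * j + 1) := ⟨j, by ring⟩
        rw [hodd.neg_pow]
        have h1 : ((2 * j : ℕ) + 1 : ℝ) = 2 * (j:ℝ) + 1 := by push_cast; ring
        rw [h1]
        have hs' : s ≠ 0 := ne_of_gt hs
        have hd : (2 * (j:ℝ) + 1) ≠ 0 := by positivity
        field_simp
        ring


/-- For every `s > 0` and every natural number `j`, the `L²` norm of `C_j` over `[-s,s]²`
satisfies `(∫∫ C_j(x,y)² dx dy)^(1/2) ≤ √(2s) · (π s)^j / (2j + 1)`. -/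
theorem CKernel_L2_norm_le (s : ℝ) (hs : 0 < s) (j : ℕ) :
    (∫ y in (-s)..s, ∫ x in (-s)..s, (Ckernel s j x y) ^ 2) ^ (1 / 2 : ℝ) ≤
      Real.sqrt (2 * s) * (π * s) ^ j / (2 * j + 1) := by
  set B : ℝ := 2 * s * (π * s) ^ (2 * j) / (2 * (j:ℝ) + 1) ^ 2 with hB
  have key : (∫ y in (-s)..s, ∫ x in (-s)..s, (Ckernel s j x y) ^ 2) ≤ B := by
    have hg : IntervalIntegrable
        (fun y => (π * y / s) ^ (2 * j) * (s ^ (2 * j) / (2 * (j:ℝ) + 1))) volume (-s) s := by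
      apply Continuous.intervalIntegrable; fun_prop
    have hgval : (∫ y in (-s)..s, (π * y / s) ^ (2 * j) * (s ^ (2 * j) / (2 * (j:ℝ) + 1))) = B := by
      have : ∀ y : ℝ, (π * y / s) ^ (2 * j) * (s ^ (2 * j) / (2 * (j:ℝ) + 1))
          = ((π / s) ^ (2 * j) * (s ^ (2 * j) / (2 * (j:ℝ) + 1))) * y ^ (2 * j) := by
        intro y
        rw [show π * y / s = (π / s) * y by ring, mul_pow]; ring
      simp_rw [this]
      rw [intervalIntegral.integral_const_mul, integral_pow]
      have hodd : Odd (2 * j + 1) := ⟨j, by ring⟩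
      rw [hodd.neg_pow]
      have h1 : ((2 * j : ℕ) + 1 : ℝ) = 2 * (j:ℝ) + 1 := by push_cast; ring
      rw [h1, hB]
      have hs' : s ≠ 0 := ne_of_gt hs
      have hd : (2 * (j:ℝ) + 1) ≠ 0 := by positivity
      rw [mul_pow π s (2*j), div_pow]
      field_simp
      ring
    rw [← hgval]
    by_cases hF : IntervalIntegrable (fun y => ∫ x in (-s)..s, (Ckernel s j x y) ^ 2)
        volume (-s) s
    · exact intervalIntegral.integral_mono_on (by linarith) hF hg
        fun y _ => inner_bound s hs j y
    · rw [intervalIntegral.integral_undef hF]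
      apply intervalIntegral.integral_nonneg (by linarith)
      intro y _
      exact mul_nonneg ((even_two_mul j).pow_nonneg _) (by positivity)
  have hBnn : (0:ℝ) ≤ B := by positivity
  have hRHS : (0:ℝ) ≤ Real.sqrt (2 * s) * (π * s) ^ j / (2 * (j:ℝ) + 1) := by positivity
  rw [← Real.sqrt_eq_rpow]
  calc Real.sqrt (∫ y in (-s)..s, ∫ x in (-s)..s, (Ckernel s j x y) ^ 2)
      ≤ Real.sqrt B := Real.sqrt_le_sqrt key
    _ = Real.sqrt (2 * s) * (π * s) ^ j / (2 * (j:ℝ) + 1) := by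
        rw [show B = (Real.sqrt (2 * s) * (π * s) ^ j / (2 * (j:ℝ) + 1)) ^ 2 by
          rw [div_pow, mul_pow, Real.sq_sqrt (by positivity), ← pow_mul, hB]; ring]
        exact Real.sqrt_sq hRHS
end

section
/- For every s > 0 and all x, y ∈ [−s, s], the kernel identity cos(π(x − y)) = ∫_{−s}^{s} [ C_0(x,u)·C_0(u,y) + S_0(x,u)·S_0(u,y) − C_0(x,u)·S_1(u,y) − S_1(x,u)·C_0(u,y) + S_0(x,u)·C_1(u,y) + C_1(x,u)·S_0(u,y) ] du holds. -/
open Real MeasureTheory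

/-- The kernel function `S_j(x,y) = (1/√(2s)) · sin(π x y / s) · (π x y / s)^j`. -/
noncomputable def Skernel (s : ℝ) (j : ℕ) (x y : ℝ) : ℝ :=
  (1 / Real.sqrt (2 * s)) * Real.sin (π * x * y / s) * (π * x * y / s) ^ j

lemma kernel_aux (k t A B u c : ℝ) (hk : k * k = t) (huc : c * u = A - B) :
    k * Real.cos A * (k * Real.cos B) + k * Real.sin A * (k * Real.sin B)
      - k * Real.cos A * (k * Real.sin B * B) - k * Real.sin A * A * (k * Real.cos B)
      + k * Real.sin A * (k * Real.cos B * B) + k * Real.cos A * A * (k * Real.sin B)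
    = t * (1 * Real.cos (A - B) + u * (-Real.sin (A - B) * c)) := by
  rw [Real.cos_sub, Real.sin_sub]
  linear_combination
    (Real.cos A * Real.cos B + Real.sin A * Real.sin B
      - (A - B) * (Real.sin A * Real.cos B - Real.cos A * Real.sin B)) * hk
    + t * (Real.sin A * Real.cos B - Real.cos A * Real.sin B) * huc

/-- For every `s > 0` and all `x, y ∈ [-s, s]`, the kernel identity
`cos(π(x − y)) = ∫_{-s}^{s} [C₀C₀ + S₀S₀ − C₀S₁ − S₁C₀ + S₀C₁ + C₁S₀] du` holds. -/
theorem cos_sub_kernel_decomposition (s : ℝ) (hs : 0 < s) (x y : ℝ)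
    (hx : x ∈ Set.Icc (-s) s) (hy : y ∈ Set.Icc (-s) s) :
    Real.cos (π * (x - y)) =
      ∫ u in (-s)..s,
        (Ckernel s 0 x u * Ckernel s 0 u y + Skernel s 0 x u * Skernel s 0 u y
          - Ckernel s 0 x u * Skernel s 1 u y - Skernel s 1 x u * Ckernel s 0 u y
          + Skernel s 0 x u * Ckernel s 1 u y + Ckernel s 1 x u * Skernel s 0 u y) := by
  have hs0 : s ≠ 0 := hs.ne'
  have hk : (1 / Real.sqrt (2 * s)) * (1 / Real.sqrt (2 * s)) = 1 / (2 * s) := by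
    rw [div_mul_div_comm, one_mul, Real.mul_self_sqrt (by linarith)]
  set c : ℝ := π * (x - y) / s with hc
  set f : ℝ → ℝ := fun u =>
        (Ckernel s 0 x u * Ckernel s 0 u y + Skernel s 0 x u * Skernel s 0 u y
          - Ckernel s 0 x u * Skernel s 1 u y - Skernel s 1 x u * Ckernel s 0 u y
          + Skernel s 0 x u * Ckernel s 1 u y + Ckernel s 1 x u * Skernel s 0 u y) with hf
  set F : ℝ → ℝ := fun u => (1 / (2 * s)) * (u * Real.cos (c * u)) with hF
  have key : ∀ u : ℝ, HasDerivAt F (f u) u := by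
    intro u
    have h1 : HasDerivAt (fun u : ℝ => Real.cos (c * u)) (-Real.sin (c * u) * c) u := by
      simpa [Function.comp_def] using (Real.hasDerivAt_cos (c * u)).comp u ((hasDerivAt_id u).const_mul c)
    have h2 : HasDerivAt (fun u : ℝ => u * Real.cos (c * u))
        (1 * Real.cos (c * u) + u * (-Real.sin (c * u) * c)) u :=
      (hasDerivAt_id u).mul h1
    have h3 : HasDerivAt F ((1 / (2 * s)) * (1 * Real.cos (c * u) + u * (-Real.sin (c * u) * c))) u :=
      h2.const_mul (1 / (2 * s))
    convert h3 using 1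
    have hcu : c * u = π * x * u / s - π * u * y / s := by
      rw [hc]; field_simp
    simp only [hf, Ckernel, Skernel, pow_zero, pow_one, mul_one, hcu]
    exact kernel_aux _ _ _ _ _ _ hk hcu
  have hcont : Continuous f := by
    simp only [hf, Ckernel, Skernel]
    fun_prop
  have hint : IntervalIntegrable f volume (-s) s := hcont.intervalIntegrable _ _
  rw [intervalIntegral.integral_eq_sub_of_hasDerivAt (fun u _ => key u) hint]
  have hcs : c * s = π * (x - y) := by rw [hc]; field_simp
  simp only [hF]
  rw [show c * (-s) = -(c * s) by ring, Real.cos_neg, hcs]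
  field_simp
  ring
end

section
/- For every s > 0 and all x, y ∈ [−s, s], the kernel identity cos(π(x + y)) = ∫_{−s}^{s} [ C_0(x,u)·C_0(u,y) − S_0(x,u)·S_0(u,y) − C_0(x,u)·S_1(u,y) − S_1(x,u)·C_0(u,y) − S_0(x,u)·C_1(u,y) − C_1(x,u)·S_0(u,y) ] du holds. -/
open Real MeasureTheory

/-- For every `s > 0` and all `x, y ∈ [-s, s]`, the kernel identity
`cos(π(x + y)) = ∫_{-s}^{s} [C₀C₀ − S₀S₀ − C₀S₁ − S₁C₀ − S₀C₁ − C₁S₀] du` holds. -/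
theorem cos_add_kernel_decomposition (s : ℝ) (hs : 0 < s) (x y : ℝ)
    (hx : x ∈ Set.Icc (-s) s) (hy : y ∈ Set.Icc (-s) s) :
    Real.cos (π * (x + y)) =
      ∫ u in (-s)..s,
        (Ckernel s 0 x u * Ckernel s 0 u y - Skernel s 0 x u * Skernel s 0 u y
          - Ckernel s 0 x u * Skernel s 1 u y - Skernel s 1 x u * Ckernel s 0 u y
          - Skernel s 0 x u * Ckernel s 1 u y - Ckernel s 1 x u * Skernel s 0 u y) := by
  have hs0 : s ≠ 0 := ne_of_gt hs
  set c : ℝ := π * (x + y) / s with hc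
  set q : ℝ := 1 / Real.sqrt (2 * s) with hqdef
  have hq2 : q * q = 1 / (2 * s) := by
    rw [hqdef, div_mul_div_comm, one_mul,
      Real.mul_self_sqrt (by positivity : (0:ℝ) ≤ 2 * s)]
  -- F is an antiderivative of the integrand
  set F : ℝ → ℝ := fun u => (1 / (2 * s)) * (u * Real.cos (c * u)) with hF
  have hderiv : ∀ u ∈ Set.uIcc (-s) s, HasDerivAt F
      (Ckernel s 0 x u * Ckernel s 0 u y - Skernel s 0 x u * Skernel s 0 u y
        - Ckernel s 0 x u * Skernel s 1 u y - Skernel s 1 x u * Ckernel s 0 u y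
        - Skernel s 0 x u * Ckernel s 1 u y - Ckernel s 1 x u * Skernel s 0 u y) u := by
    intro u _
    have h1 : HasDerivAt (fun u : ℝ => u * Real.cos (c * u))
        (Real.cos (c * u) - c * u * Real.sin (c * u)) u := by
      have hcos : HasDerivAt (fun u : ℝ => Real.cos (c * u))
          (-Real.sin (c * u) * c) u := by
        have := ((hasDerivAt_id u).const_mul c).cos
        simpa using this
      have h := (hasDerivAt_id u).mul hcos
      simp only [id_eq, one_mul] at h
      refine h.congr_deriv ?_
      ring
    have h2 := h1.const_mul (1 / (2 * s))
    refine h2.congr_deriv ?_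
    have harg : c * u = π * x * u / s + π * u * y / s := by
      rw [hc]; field_simp
    simp only [Ckernel, Skernel, ← hqdef, pow_zero, pow_one, mul_one]
    rw [harg, Real.cos_add, Real.sin_add]
    rw [← hq2]
    ring
  rw [intervalIntegral.integral_eq_sub_of_hasDerivAt hderiv (by
    apply Continuous.intervalIntegrable
    unfold Ckernel Skernel
    fun_prop)]
  rw [hF]
  simp only
  have hcs : c * s = π * (x + y) := by rw [hc]; field_simp
  have hcns : c * (-s) = -(π * (x + y)) := by rw [hc]; field_simp
  rw [hcs, hcns, Real.cos_neg]
  field_simp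
  ring
end

section
/- For every s > 0, every natural number k, and all x, y ∈ [−s, s], the kernel identity holds: (π(x−y))^{2k+1} · sin(π(x−y)) = Σ_{j=0}^{k+1} (−1)^j · binom(2k+2, j) · ∫_{−s}^{s} [ C_j(x,u)·C_{2k+2−j}(u,y) + S_j(x,u)·S_{2k+2−j}(u,y) ] du + Σ_{j=0}^{k} (−1)^j · binom(2k+2, j) · ∫_{−s}^{s} [ C_{2k+2−j}(x,u)·C_j(u,y) + S_{2k+2−j}(x,u)·S_j(u,y) ] du + Σ_{j=0}^{k} (−1)^j · binom(2k+1, j) · (2k+2) · ∫_{−s}^{s} [ S_{2k+1−j}(x,u)·C_j(u,y) + C_j(x,u)·S_{2k+1−j}(u,y) − C_{2k+1−j}(x,u)·S_j(u,y) − S_j(x,u)·C_{2k+1−j}(u,y) ] du. -/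
open Real MeasureTheory Finset

lemma sumL1 (a b : ℝ) (k : ℕ) :
    (∑ j ∈ Finset.range (k + 2), (-1 : ℝ) ^ j * ((2 * k + 2).choose j : ℝ) *
        (a ^ j * b ^ (2 * k + 2 - j)))
      + ∑ j ∈ Finset.range (k + 1), (-1 : ℝ) ^ j * ((2 * k + 2).choose j : ℝ) *
        (a ^ (2 * k + 2 - j) * b ^ j)
      = (a - b) ^ (2 * k + 2) := by
  rw [sub_pow]
  rw [show 2 * k + 2 + 1 = (k + 2) + (k + 1) from by omega,
    Finset.sum_range_add (fun m => (-1 : ℝ) ^ (m + (2 * k + 2)) * a ^ m * b ^ (2 * k + 2 - m)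
      * ((2 * k + 2).choose m : ℝ)) (k + 2) (k + 1)]
  congr 1
  · refine Finset.sum_congr rfl fun j hj => ?_
    have h1 : (-1 : ℝ) ^ (j + (2 * k + 2)) = (-1) ^ j := by
      rw [show j + (2 * k + 2) = j + 2 * (k + 1) by ring, pow_add, pow_mul]
      norm_num
    rw [h1]; ring
  · rw [← Finset.sum_range_reflect
      (fun j => (-1 : ℝ) ^ j * ((2 * k + 2).choose j : ℝ) * (a ^ (2 * k + 2 - j) * b ^ j)) (k + 1)]
    refine Finset.sum_congr rfl fun i hi => ?_
    rw [Finset.mem_range] at hi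
    have e1 : k + 1 - 1 - i = k - i := by omega
    have e2 : 2 * k + 2 - (k - i) = k + 2 + i := by omega
    have e3 : 2 * k + 2 - (k + 2 + i) = k - i := by omega
    have e4 : ((2 * k + 2).choose (k + 2 + i) : ℝ) = ((2 * k + 2).choose (k - i) : ℝ) := by
      rw [← Nat.choose_symm (by omega : k + 2 + i ≤ 2 * k + 2), e3]
    have e5 : (-1 : ℝ) ^ (k + 2 + i + (2 * k + 2)) = (-1 : ℝ) ^ (k - i) := by
      rw [show k + 2 + i + (2 * k + 2) = (k - i) + 2 * (k + i + 2) by omega, pow_add, pow_mul]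
      norm_num
    rw [e1, e2, e3, e4, e5]; ring

lemma sumL2 (a b : ℝ) (k : ℕ) :
    ∑ j ∈ Finset.range (k + 1), (-1 : ℝ) ^ j * ((2 * k + 1).choose j : ℝ) *
        (a ^ (2 * k + 1 - j) * b ^ j - a ^ j * b ^ (2 * k + 1 - j))
      = (a - b) ^ (2 * k + 1) := by
  have hodd : (a - b) ^ (2 * k + 1) = -((b - a) ^ (2 * k + 1)) := by
    rw [show a - b = -(b - a) by ring, Odd.neg_pow ⟨k, by ring⟩]
  have hexp : (b - a) ^ (2 * k + 1)
      = (∑ j ∈ Finset.range (k + 1),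
          (-1 : ℝ) ^ (j + (2 * k + 1)) * b ^ j * a ^ (2 * k + 1 - j) * ((2 * k + 1).choose j : ℝ))
        + ∑ j ∈ Finset.range (k + 1),
          (-1 : ℝ) ^ (k + 1 + j + (2 * k + 1)) * b ^ (k + 1 + j) * a ^ (2 * k + 1 - (k + 1 + j))
            * ((2 * k + 1).choose (k + 1 + j) : ℝ) := by
    rw [sub_pow, show 2 * k + 1 + 1 = (k + 1) + (k + 1) from by omega,
      Finset.sum_range_add (fun m => (-1 : ℝ) ^ (m + (2 * k + 1)) * b ^ m * a ^ (2 * k + 1 - m)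
        * ((2 * k + 1).choose m : ℝ)) (k + 1) (k + 1)]
  have h1 : ∑ j ∈ Finset.range (k + 1), (-1 : ℝ) ^ j * ((2 * k + 1).choose j : ℝ) *
      (a ^ (2 * k + 1 - j) * b ^ j)
      = -∑ j ∈ Finset.range (k + 1),
          (-1 : ℝ) ^ (j + (2 * k + 1)) * b ^ j * a ^ (2 * k + 1 - j) * ((2 * k + 1).choose j : ℝ) := by
    rw [← Finset.sum_neg_distrib]
    refine Finset.sum_congr rfl fun j hj => ?_
    have : (-1 : ℝ) ^ (j + (2 * k + 1)) = -(-1 : ℝ) ^ j := by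
      rw [pow_add, pow_succ, pow_mul]; norm_num
    rw [this]; ring
  have h2 : ∑ j ∈ Finset.range (k + 1), (-1 : ℝ) ^ j * ((2 * k + 1).choose j : ℝ) *
      (a ^ j * b ^ (2 * k + 1 - j))
      = ∑ j ∈ Finset.range (k + 1),
          (-1 : ℝ) ^ (k + 1 + j + (2 * k + 1)) * b ^ (k + 1 + j) * a ^ (2 * k + 1 - (k + 1 + j))
            * ((2 * k + 1).choose (k + 1 + j) : ℝ) := by
    rw [← Finset.sum_range_reflect
      (fun j => (-1 : ℝ) ^ j * ((2 * k + 1).choose j : ℝ) * (a ^ j * b ^ (2 * k + 1 - j))) (k + 1)]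
    refine Finset.sum_congr rfl fun i hi => ?_
    rw [Finset.mem_range] at hi
    have e1 : k + 1 - 1 - i = k - i := by omega
    have e2 : 2 * k + 1 - (k - i) = k + 1 + i := by omega
    have e3 : 2 * k + 1 - (k + 1 + i) = k - i := by omega
    have e4 : ((2 * k + 1).choose (k + 1 + i) : ℝ) = ((2 * k + 1).choose (k - i) : ℝ) := by
      rw [← Nat.choose_symm (by omega : k + 1 + i ≤ 2 * k + 1), e3]
    have e5 : (-1 : ℝ) ^ (k + 1 + i + (2 * k + 1)) = (-1 : ℝ) ^ (k - i) := by
      rw [show k + 1 + i + (2 * k + 1) = (k - i) + 2 * (k + i + 1) by omega, pow_add, pow_mul]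
      norm_num
    rw [e1, e2, e3, e4, e5]; ring
  calc ∑ j ∈ Finset.range (k + 1), (-1 : ℝ) ^ j * ((2 * k + 1).choose j : ℝ) *
        (a ^ (2 * k + 1 - j) * b ^ j - a ^ j * b ^ (2 * k + 1 - j))
      = (∑ j ∈ Finset.range (k + 1), (-1 : ℝ) ^ j * ((2 * k + 1).choose j : ℝ) *
          (a ^ (2 * k + 1 - j) * b ^ j))
        - ∑ j ∈ Finset.range (k + 1), (-1 : ℝ) ^ j * ((2 * k + 1).choose j : ℝ) *
          (a ^ j * b ^ (2 * k + 1 - j)) := by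
        rw [← Finset.sum_sub_distrib]
        exact Finset.sum_congr rfl fun j _ => by ring
    _ = (a - b) ^ (2 * k + 1) := by rw [h1, h2, hodd, hexp]; ring

lemma keylemma (c a b : ℝ) (k : ℕ) :
    (∑ j ∈ Finset.range (k + 2), (-1 : ℝ) ^ j * ((2 * k + 2).choose j : ℝ) *
        (c * Real.cos a * a ^ j * (c * Real.cos b * b ^ (2 * k + 2 - j))
          + c * Real.sin a * a ^ j * (c * Real.sin b * b ^ (2 * k + 2 - j))))
      + (∑ j ∈ Finset.range (k + 1), (-1 : ℝ) ^ j * ((2 * k + 2).choose j : ℝ) *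
        (c * Real.cos a * a ^ (2 * k + 2 - j) * (c * Real.cos b * b ^ j)
          + c * Real.sin a * a ^ (2 * k + 2 - j) * (c * Real.sin b * b ^ j)))
      + (∑ j ∈ Finset.range (k + 1), (-1 : ℝ) ^ j * ((2 * k + 1).choose j : ℝ) * (2 * (k : ℝ) + 2) *
        (c * Real.sin a * a ^ (2 * k + 1 - j) * (c * Real.cos b * b ^ j)
          + c * Real.cos a * a ^ j * (c * Real.sin b * b ^ (2 * k + 1 - j))
          - c * Real.cos a * a ^ (2 * k + 1 - j) * (c * Real.sin b * b ^ j)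
          - c * Real.sin a * a ^ j * (c * Real.cos b * b ^ (2 * k + 1 - j))))
      = c ^ 2 * ((a - b) ^ (2 * k + 2) * Real.cos (a - b)
          + (2 * (k : ℝ) + 2) * ((a - b) ^ (2 * k + 1) * Real.sin (a - b))) := by
  have hc : Real.cos (a - b) = Real.cos a * Real.cos b + Real.sin a * Real.sin b :=
    Real.cos_sub a b
  have hs : Real.sin (a - b) = Real.sin a * Real.cos b - Real.cos a * Real.sin b :=
    Real.sin_sub a b
  have e1 : (∑ j ∈ Finset.range (k + 2), (-1 : ℝ) ^ j * ((2 * k + 2).choose j : ℝ) *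
        (c * Real.cos a * a ^ j * (c * Real.cos b * b ^ (2 * k + 2 - j))
          + c * Real.sin a * a ^ j * (c * Real.sin b * b ^ (2 * k + 2 - j))))
      = (c ^ 2 * Real.cos (a - b)) * ∑ j ∈ Finset.range (k + 2),
          (-1 : ℝ) ^ j * ((2 * k + 2).choose j : ℝ) * (a ^ j * b ^ (2 * k + 2 - j)) := by
    rw [Finset.mul_sum]
    exact Finset.sum_congr rfl fun j _ => by rw [hc]; ring
  have e2 : (∑ j ∈ Finset.range (k + 1), (-1 : ℝ) ^ j * ((2 * k + 2).choose j : ℝ) *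
        (c * Real.cos a * a ^ (2 * k + 2 - j) * (c * Real.cos b * b ^ j)
          + c * Real.sin a * a ^ (2 * k + 2 - j) * (c * Real.sin b * b ^ j)))
      = (c ^ 2 * Real.cos (a - b)) * ∑ j ∈ Finset.range (k + 1),
          (-1 : ℝ) ^ j * ((2 * k + 2).choose j : ℝ) * (a ^ (2 * k + 2 - j) * b ^ j) := by
    rw [Finset.mul_sum]
    exact Finset.sum_congr rfl fun j _ => by rw [hc]; ring
  have e3 : (∑ j ∈ Finset.range (k + 1), (-1 : ℝ) ^ j * ((2 * k + 1).choose j : ℝ)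
        * (2 * (k : ℝ) + 2) *
        (c * Real.sin a * a ^ (2 * k + 1 - j) * (c * Real.cos b * b ^ j)
          + c * Real.cos a * a ^ j * (c * Real.sin b * b ^ (2 * k + 1 - j))
          - c * Real.cos a * a ^ (2 * k + 1 - j) * (c * Real.sin b * b ^ j)
          - c * Real.sin a * a ^ j * (c * Real.cos b * b ^ (2 * k + 1 - j))))
      = (c ^ 2 * (2 * (k : ℝ) + 2) * Real.sin (a - b)) * ∑ j ∈ Finset.range (k + 1),
          (-1 : ℝ) ^ j * ((2 * k + 1).choose j : ℝ) *
            (a ^ (2 * k + 1 - j) * b ^ j - a ^ j * b ^ (2 * k + 1 - j)) := by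
    rw [Finset.mul_sum]
    exact Finset.sum_congr rfl fun j _ => by rw [hs]; ring
  rw [e1, e2, e3]
  have h1 := sumL1 a b k
  have h2 := sumL2 a b k
  linear_combination (c ^ 2 * Real.cos (a - b)) * h1
    + (c ^ 2 * (2 * (k : ℝ) + 2) * Real.sin (a - b)) * h2

lemma sumint (n : ℕ) (g : ℕ → ℝ → ℝ) (hg : ∀ j, Continuous (g j)) (co : ℕ → ℝ) (a b : ℝ) :
    ∑ j ∈ Finset.range n, co j * ∫ u in a..b, g j u
      = ∫ u in a..b, ∑ j ∈ Finset.range n, co j * g j u := by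
  rw [intervalIntegral.integral_finset_sum
    (fun j _ => (((hg j).intervalIntegrable a b).const_mul (co j)))]
  exact Finset.sum_congr rfl fun j _ => (intervalIntegral.integral_const_mul _ _).symm

/-- For every `s > 0`, every natural number `k` and all `x, y ∈ [-s,s]`, the kernel
`(π(x−y))^(2k+1) · sin(π(x−y))` decomposes as a signed sum of integral compositions of
the kernels `C_j` and `S_j`. -/
theorem A_kernel_decomposition (s : ℝ) (hs : 0 < s) (k : ℕ) (x y : ℝ)
    (hx : x ∈ Set.Icc (-s) s) (hy : y ∈ Set.Icc (-s) s) :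
    (π * (x - y)) ^ (2 * k + 1) * Real.sin (π * (x - y)) =
      (∑ j ∈ Finset.range (k + 2), (-1 : ℝ) ^ j * (Nat.choose (2 * k + 2) j : ℝ) *
        ∫ u in (-s)..s,
          (Ckernel s j x u * Ckernel s (2 * k + 2 - j) u y
            + Skernel s j x u * Skernel s (2 * k + 2 - j) u y))
      + (∑ j ∈ Finset.range (k + 1), (-1 : ℝ) ^ j * (Nat.choose (2 * k + 2) j : ℝ) *
        ∫ u in (-s)..s,
          (Ckernel s (2 * k + 2 - j) x u * Ckernel s j u y
            + Skernel s (2 * k + 2 - j) x u * Skernel s j u y))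
      + (∑ j ∈ Finset.range (k + 1), (-1 : ℝ) ^ j * (Nat.choose (2 * k + 1) j : ℝ)
          * (2 * k + 2) *
        ∫ u in (-s)..s,
          (Skernel s (2 * k + 1 - j) x u * Ckernel s j u y
            + Ckernel s j x u * Skernel s (2 * k + 1 - j) u y
            - Ckernel s (2 * k + 1 - j) x u * Skernel s j u y
            - Skernel s j x u * Ckernel s (2 * k + 1 - j) u y)) := by
  have hsne : s ≠ 0 := ne_of_gt hs
  have h2s : (0 : ℝ) < 2 * s := by linarith
  have hcsq : (1 / Real.sqrt (2 * s)) ^ 2 = 1 / (2 * s) := by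
    rw [div_pow, one_pow, Real.sq_sqrt h2s.le]
  simp only [Ckernel, Skernel]
  set c : ℝ := 1 / Real.sqrt (2 * s) with hcdef
  set D : ℝ := π * (x - y) / s with hDdef
  clear_value c D
  -- convert each sum of integrals into a single integral
  have E1 := sumint (k + 2)
    (fun j u => c * Real.cos (π * x * u / s) * (π * x * u / s) ^ j *
        (c * Real.cos (π * u * y / s) * (π * u * y / s) ^ (2 * k + 2 - j))
      + c * Real.sin (π * x * u / s) * (π * x * u / s) ^ j *
        (c * Real.sin (π * u * y / s) * (π * u * y / s) ^ (2 * k + 2 - j)))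
    (fun j => by fun_prop)
    (fun j => (-1 : ℝ) ^ j * ((2 * k + 2).choose j : ℝ)) (-s) s
  have E2 := sumint (k + 1)
    (fun j u => c * Real.cos (π * x * u / s) * (π * x * u / s) ^ (2 * k + 2 - j) *
        (c * Real.cos (π * u * y / s) * (π * u * y / s) ^ j)
      + c * Real.sin (π * x * u / s) * (π * x * u / s) ^ (2 * k + 2 - j) *
        (c * Real.sin (π * u * y / s) * (π * u * y / s) ^ j))
    (fun j => by fun_prop)
    (fun j => (-1 : ℝ) ^ j * ((2 * k + 2).choose j : ℝ)) (-s) s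
  have E3 := sumint (k + 1)
    (fun j u => c * Real.sin (π * x * u / s) * (π * x * u / s) ^ (2 * k + 1 - j) *
        (c * Real.cos (π * u * y / s) * (π * u * y / s) ^ j)
      + c * Real.cos (π * x * u / s) * (π * x * u / s) ^ j *
        (c * Real.sin (π * u * y / s) * (π * u * y / s) ^ (2 * k + 1 - j))
      - c * Real.cos (π * x * u / s) * (π * x * u / s) ^ (2 * k + 1 - j) *
        (c * Real.sin (π * u * y / s) * (π * u * y / s) ^ j)
      - c * Real.sin (π * x * u / s) * (π * x * u / s) ^ j *
        (c * Real.cos (π * u * y / s) * (π * u * y / s) ^ (2 * k + 1 - j)))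
    (fun j => by fun_prop)
    (fun j => (-1 : ℝ) ^ j * ((2 * k + 1).choose j : ℝ) * (2 * (k : ℝ) + 2)) (-s) s
  rw [E1, E2, E3]
  beta_reduce
  have cA : Continuous (fun u : ℝ => ∑ j ∈ Finset.range (k + 2),
      (-1 : ℝ) ^ j * ((2 * k + 2).choose j : ℝ) * (c * Real.cos (π * x * u / s) * (π * x * u / s) ^ j *
        (c * Real.cos (π * u * y / s) * (π * u * y / s) ^ (2 * k + 2 - j))
      + c * Real.sin (π * x * u / s) * (π * x * u / s) ^ j *
        (c * Real.sin (π * u * y / s) * (π * u * y / s) ^ (2 * k + 2 - j)))) :=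
    continuous_finset_sum _ fun j _ => by fun_prop
  have cB : Continuous (fun u : ℝ => ∑ j ∈ Finset.range (k + 1),
      (-1 : ℝ) ^ j * ((2 * k + 2).choose j : ℝ) * (c * Real.cos (π * x * u / s) * (π * x * u / s) ^ (2 * k + 2 - j) *
        (c * Real.cos (π * u * y / s) * (π * u * y / s) ^ j)
      + c * Real.sin (π * x * u / s) * (π * x * u / s) ^ (2 * k + 2 - j) *
        (c * Real.sin (π * u * y / s) * (π * u * y / s) ^ j))) :=
    continuous_finset_sum _ fun j _ => by fun_prop
  have cC : Continuous (fun u : ℝ => ∑ j ∈ Finset.range (k + 1),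
      (-1 : ℝ) ^ j * ((2 * k + 1).choose j : ℝ) * (2 * (k : ℝ) + 2) * (c * Real.sin (π * x * u / s) * (π * x * u / s) ^ (2 * k + 1 - j) *
        (c * Real.cos (π * u * y / s) * (π * u * y / s) ^ j)
      + c * Real.cos (π * x * u / s) * (π * x * u / s) ^ j *
        (c * Real.sin (π * u * y / s) * (π * u * y / s) ^ (2 * k + 1 - j))
      - c * Real.cos (π * x * u / s) * (π * x * u / s) ^ (2 * k + 1 - j) *
        (c * Real.sin (π * u * y / s) * (π * u * y / s) ^ j)
      - c * Real.sin (π * x * u / s) * (π * x * u / s) ^ j *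
        (c * Real.cos (π * u * y / s) * (π * u * y / s) ^ (2 * k + 1 - j)))) :=
    continuous_finset_sum _ fun j _ => by fun_prop
  rw [← intervalIntegral.integral_add (cA.intervalIntegrable (-s) s) (cB.intervalIntegrable (-s) s),
    ← intervalIntegral.integral_add ((cA.intervalIntegrable (-s) s).add (cB.intervalIntegrable (-s) s))
      (cC.intervalIntegrable (-s) s)]
  have EPT : ∀ u : ℝ, (fun u : ℝ => ∑ j ∈ Finset.range (k + 2),
      (-1 : ℝ) ^ j * ((2 * k + 2).choose j : ℝ) * (c * Real.cos (π * x * u / s) * (π * x * u / s) ^ j *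
        (c * Real.cos (π * u * y / s) * (π * u * y / s) ^ (2 * k + 2 - j))
      + c * Real.sin (π * x * u / s) * (π * x * u / s) ^ j *
        (c * Real.sin (π * u * y / s) * (π * u * y / s) ^ (2 * k + 2 - j)))) u + (fun u : ℝ => ∑ j ∈ Finset.range (k + 1),
      (-1 : ℝ) ^ j * ((2 * k + 2).choose j : ℝ) * (c * Real.cos (π * x * u / s) * (π * x * u / s) ^ (2 * k + 2 - j) *
        (c * Real.cos (π * u * y / s) * (π * u * y / s) ^ j)
      + c * Real.sin (π * x * u / s) * (π * x * u / s) ^ (2 * k + 2 - j) *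
        (c * Real.sin (π * u * y / s) * (π * u * y / s) ^ j))) u + (fun u : ℝ => ∑ j ∈ Finset.range (k + 1),
      (-1 : ℝ) ^ j * ((2 * k + 1).choose j : ℝ) * (2 * (k : ℝ) + 2) * (c * Real.sin (π * x * u / s) * (π * x * u / s) ^ (2 * k + 1 - j) *
        (c * Real.cos (π * u * y / s) * (π * u * y / s) ^ j)
      + c * Real.cos (π * x * u / s) * (π * x * u / s) ^ j *
        (c * Real.sin (π * u * y / s) * (π * u * y / s) ^ (2 * k + 1 - j))
      - c * Real.cos (π * x * u / s) * (π * x * u / s) ^ (2 * k + 1 - j) *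
        (c * Real.sin (π * u * y / s) * (π * u * y / s) ^ j)
      - c * Real.sin (π * x * u / s) * (π * x * u / s) ^ j *
        (c * Real.cos (π * u * y / s) * (π * u * y / s) ^ (2 * k + 1 - j)))) u
      = 1 / (2 * s) * (D ^ (2 * k + 1) * ((2 * (k : ℝ) + 2) * u ^ (2 * k + 1) * Real.sin (D * u)
          + u ^ (2 * k + 2) * (Real.cos (D * u) * D))) := by
    intro u
    have hkey := keylemma c (π * x * u / s) (π * u * y / s) k
    have hab : π * x * u / s - π * u * y / s = D * u := by rw [hDdef]; ring
    beta_reduce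
    rw [hkey, hab, hcsq]
    ring
  simp only [EPT]
  rw [intervalIntegral.integral_const_mul]
  have E7 : (∫ u in (-s)..s, D ^ (2 * k + 1) * ((2 * (k : ℝ) + 2) * u ^ (2 * k + 1)
        * Real.sin (D * u) + u ^ (2 * k + 2) * (Real.cos (D * u) * D)))
      = D ^ (2 * k + 1) * (s ^ (2 * k + 2) * Real.sin (D * s))
        - D ^ (2 * k + 1) * ((-s) ^ (2 * k + 2) * Real.sin (D * (-s))) := by
    have hd : ∀ u ∈ Set.uIcc (-s) s,
        HasDerivAt (fun u : ℝ => D ^ (2 * k + 1) * (u ^ (2 * k + 2) * Real.sin (D * u)))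
          (D ^ (2 * k + 1) * ((2 * (k : ℝ) + 2) * u ^ (2 * k + 1) * Real.sin (D * u)
            + u ^ (2 * k + 2) * (Real.cos (D * u) * D))) u := by
      intro u _
      have h1 : HasDerivAt (fun u : ℝ => u ^ (2 * k + 2)) ((2 * (k : ℝ) + 2) * u ^ (2 * k + 1)) u := by
        have h0 := hasDerivAt_pow (2 * k + 2) u
        rw [show 2 * k + 2 - 1 = 2 * k + 1 from by omega] at h0
        push_cast at h0
        exact h0
      have h2 : HasDerivAt (fun u : ℝ => Real.sin (D * u)) (Real.cos (D * u) * D) u := by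
        have := (Real.hasDerivAt_sin (D * u)).comp u ((hasDerivAt_id u).const_mul D)
        simpa [Function.comp_def] using this
      exact (h1.mul h2).const_mul _
    have hi : IntervalIntegrable (fun u : ℝ => D ^ (2 * k + 1) * ((2 * (k : ℝ) + 2) * u ^ (2 * k + 1)
        * Real.sin (D * u) + u ^ (2 * k + 2) * (Real.cos (D * u) * D))) volume (-s) s :=
      (by fun_prop : Continuous _).intervalIntegrable (-s) s
    simpa using intervalIntegral.integral_eq_sub_of_hasDerivAt hd hi
  rw [E7]
  have hxy : π * (x - y) = D * s := by rw [hDdef]; field_simp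
  rw [hxy, show D * (-s) = -(D * s) from by ring, Real.sin_neg,
    show ((-s : ℝ)) ^ (2 * k + 2) = s ^ (2 * k + 2) from Even.neg_pow ⟨k + 1, by ring⟩ s]
  field_simp
  ring
end

section
/- For every real number x with 0 < |x| < π, the cosecant function admits the convergent Laurent series csc(x) = Σ_{n=0}^{∞} (−1)^{n+1} · 2 · (2^{2n−1} − 1) · B_{2n} · x^{2n−1} / (2n)!, where the series converges absolutely. -/
open Real

open PowerSeries Finset Nat

noncomputable def aQ (k : ℕ) : ℚ := (-1)^k * 4^k * bernoulli (2*k) / (2*k)!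
noncomputable def aR (k : ℕ) : ℝ := ((aQ k : ℚ) : ℝ)


lemma rescale_two_bps_mul_exp_add_one :
    rescale (2:ℚ) (bernoulliPowerSeries ℚ) * (exp ℚ + 1) = 2 * bernoulliPowerSeries ℚ := by
  have h1 : bernoulliPowerSeries ℚ * (exp ℚ - 1) = X := bernoulliPowerSeries_mul_exp_sub_one ℚ
  have h2 : rescale (2:ℚ) (bernoulliPowerSeries ℚ) * (rescale (2:ℚ) (exp ℚ) - 1) =
      rescale (2:ℚ) X := by
    rw [← map_one (rescale (2:ℚ)), ← map_sub, ← map_mul, h1]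
  have h3 : rescale (2:ℚ) (exp ℚ) = exp ℚ * exp ℚ := by
    have := exp_mul_exp_eq_exp_add (1:ℚ) 1; rw [rescale_one] at this; norm_num at this; rw [← this]
  have h4 : rescale (2:ℚ) (X : PowerSeries ℚ) = 2 * X := by
    ext n
    simp only [coeff_rescale, coeff_X, two_mul, map_add, coeff_X]
    split <;> simp_all <;> norm_num
  have h5 : rescale (2:ℚ) (bernoulliPowerSeries ℚ) * (exp ℚ + 1) * (exp ℚ - 1)
      = 2 * bernoulliPowerSeries ℚ * (exp ℚ - 1) := by
    rw [mul_assoc 2, h1]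
    rw [← h4, ← h2, h3]; ring
  have hne : (exp ℚ - 1 : PowerSeries ℚ) ≠ 0 := by
    intro h
    have := congrArg (coeff 1) h
    simp [coeff_exp] at this
  exact mul_right_cancel₀ hne h5

lemma bern_sum_two (n : ℕ) :
    ∑ i ∈ range (n+1), (n.choose i : ℚ) * 2^i * bernoulli i = (2 - 2^n) * bernoulli n := by
  have h := congrArg (coeff n) rescale_two_bps_mul_exp_add_one
  rw [coeff_mul] at h
  rw [Finset.Nat.sum_antidiagonal_eq_sum_range_succ_mk] at h
  have hL : ∀ i ∈ range (n+1),
      coeff i (rescale (2:ℚ) (bernoulliPowerSeries ℚ)) * coeff (n - i) (exp ℚ + 1)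
      = 2^i * (bernoulli i / i !) * ((n-i)! : ℚ)⁻¹
        + (if n - i = 0 then 2^i * (bernoulli i / i !) else 0) := by
    intro i _
    rw [coeff_rescale, map_add, coeff_exp, coeff_one]
    simp only [bernoulliPowerSeries, coeff_mk, Algebra.algebraMap_self_apply, one_div]
    split <;> ring
  rw [Finset.sum_congr rfl hL, Finset.sum_add_distrib] at h
  have h2 : (∑ i ∈ range (n+1), if n - i = 0 then 2^i * (bernoulli i / (i ! : ℚ)) else 0)
      = 2^n * (bernoulli n / (n ! : ℚ)) := by
    have hcong : ∀ i ∈ range (n+1), (if n - i = 0 then 2^i * (bernoulli i / (i ! : ℚ)) else 0)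
        = (if i = n then 2^i * (bernoulli i / (i ! : ℚ)) else 0) := by
      intro i hi
      simp only [mem_range, Nat.lt_succ_iff] at hi
      simp only [Nat.sub_eq_zero_iff_le]
      exact if_congr ⟨fun h' => le_antisymm hi h', fun h' => h' ▸ le_refl _⟩ rfl rfl
    rw [Finset.sum_congr rfl hcong, Finset.sum_ite_eq' (range (n+1)) n]
    simp
  rw [h2] at h
  have hcoeff : coeff n (2 * bernoulliPowerSeries ℚ) = 2 * (bernoulli n / n !) := by
    have : (2 : PowerSeries ℚ) = C 2 := by rw [map_ofNat]
    rw [this, coeff_C_mul]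
    simp [bernoulliPowerSeries]
  rw [hcoeff] at h
  have hS : ∑ i ∈ range (n+1), 2^i * (bernoulli i / (i ! : ℚ)) * ((n-i)! : ℚ)⁻¹
      = (2 - 2^n) * bernoulli n / n ! := by
    field_simp at h ⊢
    linarith [h]
  have hterm : ∀ i ∈ range (n+1), (n.choose i : ℚ) * 2^i * bernoulli i
      = (n ! : ℚ) * (2^i * (bernoulli i / (i ! : ℚ)) * ((n-i)! : ℚ)⁻¹) := by
    intro i hi
    simp only [mem_range, Nat.lt_succ_iff] at hi
    have hfac := Nat.choose_mul_factorial_mul_factorial hi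
    have : (n.choose i : ℚ) * i ! * (n-i)! = n ! := by exact_mod_cast congrArg Nat.cast hfac
    have hi0 : (i ! : ℚ) ≠ 0 := Nat.cast_ne_zero.mpr (Nat.factorial_ne_zero i)
    have hni0 : ((n-i)! : ℚ) ≠ 0 := Nat.cast_ne_zero.mpr (Nat.factorial_ne_zero (n-i))
    field_simp
    linear_combination bernoulli i * this
  rw [Finset.sum_congr rfl hterm, ← Finset.mul_sum, hS]
  have hn0 : (n ! : ℚ) ≠ 0 := Nat.cast_ne_zero.mpr (Nat.factorial_ne_zero n)
  field_simp



lemma sum_range_even_odd (f : ℕ → ℚ) (n : ℕ) :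
    ∑ i ∈ range (2*n), f i = ∑ i ∈ range n, f (2*i) + ∑ i ∈ range n, f (2*i+1) := by
  induction n with
  | zero => simp
  | succ n ih =>
    have h : 2*(n+1) = (2*n)+1+1 := by ring
    rw [h, Finset.sum_range_succ, Finset.sum_range_succ, ih, Finset.sum_range_succ,
      Finset.sum_range_succ]
    ring


lemma bern_even_sum (n : ℕ) :
    ∑ k ∈ range (n+1), ((2*n+1).choose (2*k) : ℚ) * 4^k * bernoulli (2*k) = 2*n+1 := by
  have h := bern_sum_two (2*n+1)
  have hodd : bernoulli (2*n+1) = 0 ∨ (2:ℚ) - 2^(2*n+1) = 0 := by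
    rcases Nat.eq_zero_or_pos n with hn | hn
    · right; subst hn; norm_num
    · left
      rw [bernoulli_eq_bernoulli'_of_ne_one (by omega)]
      exact bernoulli'_eq_zero_of_odd ⟨n, by ring⟩ (by omega)
  have hrhs : ((2:ℚ) - 2^(2*n+1)) * bernoulli (2*n+1) = 0 := by
    rcases hodd with h' | h' <;> simp [h']
  rw [hrhs] at h
  have hsplit : (2*n+1)+1 = 2*(n+1) := by ring
  rw [hsplit, sum_range_even_odd] at h
  have hoddsum : ∑ i ∈ range (n+1),
      ((2*n+1).choose (2*i+1) : ℚ) * 2^(2*i+1) * bernoulli (2*i+1) = -(2*n+1) := by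
    rw [Finset.sum_eq_single 0]
    · simp [bernoulli_one]
      ring
    · intro i _ hi
      have : bernoulli (2*i+1) = 0 := by
        rw [bernoulli_eq_bernoulli'_of_ne_one (by omega)]
        exact bernoulli'_eq_zero_of_odd ⟨i, by ring⟩ (by omega)
      simp [this]
    · intro h'; simp at h'
  rw [hoddsum] at h
  have heq : ∀ k ∈ range (n+1), ((2*n+1).choose (2*k) : ℚ) * 2^(2*k) * bernoulli (2*k)
      = ((2*n+1).choose (2*k) : ℚ) * 4^k * bernoulli (2*k) := by
    intro k _
    congr 1
    rw [show (4:ℚ)^k = 2^(2*k) by rw [pow_mul]; norm_num]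
  rw [Finset.sum_congr rfl heq] at h
  linarith

lemma key_identity (n : ℕ) :
    ∑ k ∈ range (n+1), aQ k * ((-1:ℚ)^(n-k) / (2*(n-k)+1)!) = (-1)^n / (2*n)! := by
  have H := bern_even_sum n
  have hterm : ∀ k ∈ range (n+1), aQ k * ((-1:ℚ)^(n-k) / (2*(n-k)+1)!)
      = (((2*n+1).choose (2*k) : ℚ) * 4^k * bernoulli (2*k)) * ((-1)^n / (2*n+1)!) := by
    intro k hk
    simp only [mem_range, Nat.lt_succ_iff] at hk
    have h2k : 2*k ≤ 2*n+1 := by omega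
    have hfac := Nat.choose_mul_factorial_mul_factorial h2k
    have hsub : 2*n+1 - 2*k = 2*(n-k)+1 := by omega
    rw [hsub] at hfac
    have hfacQ : ((2*n+1).choose (2*k) : ℚ) * (2*k)! * (2*(n-k)+1)! = (2*n+1)! := by
      exact_mod_cast congrArg Nat.cast hfac
    have hsign : (-1:ℚ)^k * (-1:ℚ)^(n-k) = (-1)^n := by
      rw [← pow_add]; congr 1; omega
    have h1 : ((2*k)! : ℚ) ≠ 0 := Nat.cast_ne_zero.mpr (Nat.factorial_ne_zero _)
    have h2 : ((2*(n-k)+1)! : ℚ) ≠ 0 := Nat.cast_ne_zero.mpr (Nat.factorial_ne_zero _)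
    have h3 : ((2*n+1)! : ℚ) ≠ 0 := Nat.cast_ne_zero.mpr (Nat.factorial_ne_zero _)
    rw [aQ]
    field_simp
    linear_combination (bernoulli (2*k) * ((2*n+1)! : ℚ)) * hsign - (bernoulli (2*k) * (-1:ℚ)^n) * hfacQ
  rw [Finset.sum_congr rfl hterm, ← Finset.sum_mul, H]
  have hfs : ((2*n+1)! : ℚ) = (2*n+1) * (2*n)! := by
    rw [show 2*n+1 = (2*n)+1 from rfl, Nat.factorial_succ]
    push_cast; ring
  rw [hfs]
  have h1 : ((2*n)! : ℚ) ≠ 0 := Nat.cast_ne_zero.mpr (Nat.factorial_ne_zero _)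
  have h2 : ((2:ℚ)*n+1) ≠ 0 := by positivity
  field_simp



lemma zeta_le_two {k : ℕ} (hk : k ≠ 0) : (∑' n : ℕ, 1 / (n:ℝ)^(2*k)) ≤ 2 := by
  have h2 := hasSum_zeta_two
  have hle : (∑' n : ℕ, 1 / (n:ℝ)^(2*k)) ≤ ∑' n : ℕ, (1:ℝ) / (n:ℝ)^2 := by
    apply Summable.tsum_le_tsum _ _ h2.summable
    · intro n
      rcases Nat.eq_zero_or_pos n with rfl | hn
      · rw [Nat.cast_zero, zero_pow (by omega : 2*k ≠ 0), zero_pow (by norm_num : (2:ℕ) ≠ 0)]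
      · apply one_div_le_one_div_of_le
        · positivity
        · exact pow_le_pow_right₀ (by exact_mod_cast hn) (by omega)
    · exact (hasSum_zeta_nat hk).summable
  rw [h2.tsum_eq] at hle
  nlinarith [Real.pi_lt_d2, Real.pi_pos]

lemma aR_bound (k : ℕ) : |aR k| ≤ 4 / π ^ (2*k) := by
  rcases Nat.eq_zero_or_pos k with rfl | hk
  · norm_num [aR, aQ]
  have hk0 : k ≠ 0 := by omega
  have hz := hasSum_zeta_nat hk0
  set S := ∑' n : ℕ, 1 / (n:ℝ)^(2*k) with hS
  have hSnn : 0 ≤ S := tsum_nonneg (fun n => by positivity)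
  have hSle : S ≤ 2 := zeta_le_two hk0
  have hE : (-1:ℝ)^(k+1) * 2^(2*k-1) * π^(2*k) * ((bernoulli (2*k) : ℚ) : ℝ) / (2*k)! = S :=
    hz.tsum_eq.symm
  set c := ((bernoulli (2*k) : ℚ) : ℝ) with hc
  have habs : 2^(2*k-1) * π^(2*k) * |c| / (2*k)! = S := by
    have h' := congrArg abs hE
    rw [abs_of_nonneg hSnn] at h'
    rw [← h', abs_div, abs_mul, abs_mul, abs_mul]
    rw [abs_pow, abs_neg, abs_one, one_pow, one_mul,
      abs_of_nonneg (by positivity : (0:ℝ) ≤ (2:ℝ)^(2*k-1)),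
      abs_of_nonneg (by positivity : (0:ℝ) ≤ π^(2*k)),
      Nat.abs_cast]
  have haR : |aR k| = 4^k * |c| / (2*k)! := by
    rw [aR, aQ]
    push_cast
    rw [abs_div, abs_mul, abs_mul, abs_pow, abs_neg, abs_one, one_pow, one_mul, abs_pow]
    norm_num [Nat.abs_cast]
    rw [hc]
  have h4 : (4:ℝ)^k = 2 * 2^(2*k-1) := by
    have he : (2:ℝ)^(2*k) = 2^((2*k-1)+1) := by congr 1; omega
    calc (4:ℝ)^k = 2^(2*k) := by rw [show (4:ℝ) = 2^2 by norm_num, ← pow_mul]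
    _ = 2 * 2^(2*k-1) := by rw [he, pow_succ]; ring
  have hpi : (0:ℝ) < π^(2*k) := by positivity
  have hfac : (0:ℝ) < (2*k)! := by exact_mod_cast Nat.factorial_pos _
  have h2p : (0:ℝ) < 2^(2*k-1) := by positivity
  rw [haR, h4]
  rw [div_le_div_iff₀ hfac hpi] at *
  -- |aR| * π^(2k) = 2 * S * ... derive
  have : 2 * 2^(2*k-1) * |c| * π^(2*k) = 2 * S * (2*k)! := by
    rw [← habs]; field_simp
  nlinarith [hfac, hSnn]




lemma summableA {y : ℝ} (hy : |y| < π) : Summable (fun k => |aR k * y^(2*k)|) := by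
  have hπ := Real.pi_pos
  have hr1 : |y| / π < 1 := (div_lt_one hπ).mpr hy
  have hr0 : 0 ≤ |y| / π := by positivity
  have hr2 : (|y|/π)^2 < 1 := by nlinarith
  have hgeo : Summable (fun k : ℕ => 4 * ((|y|/π)^2)^k) :=
    (summable_geometric_of_lt_one (by positivity) hr2).mul_left 4
  refine Summable.of_nonneg_of_le (fun k => abs_nonneg _) (fun k => ?_) hgeo
  rw [abs_mul, abs_pow]
  have h2 : ((|y|/π)^2)^k = |y|^(2*k) / π^(2*k) := by
    rw [div_pow, div_pow, ← pow_mul, ← pow_mul]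
  rw [h2]
  have h3 := aR_bound k
  have h4 : (0:ℝ) ≤ |y|^(2*k) := by positivity
  calc |aR k| * |y|^(2*k) ≤ (4 / π^(2*k)) * |y|^(2*k) := mul_le_mul_of_nonneg_right h3 h4
  _ = 4 * (|y|^(2*k) / π^(2*k)) := by ring

lemma hasSumA {y : ℝ} (h0 : y ≠ 0) (hy : |y| < π) (hs : Real.sin y ≠ 0) :
    HasSum (fun k => aR k * y^(2*k)) (y * Real.cos y / Real.sin y) := by
  set f : ℕ → ℝ := fun k => aR k * y^(2*k) with hf
  set g : ℕ → ℝ := fun j => (-1)^j * y^(2*j+1) / (2*j+1)! with hg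
  have hfn : Summable (fun k => ‖f k‖) := by simpa [Real.norm_eq_abs, hf, abs_mul, abs_pow] using summableA hy
  have hgn : Summable (fun j => ‖g j‖) := by
    have hb : Summable (fun n : ℕ => |y|^n / n !) := Real.summable_pow_div_factorial |y|
    have hcomp : Summable ((fun n : ℕ => |y|^n / n !) ∘ (fun j => 2*j+1)) :=
      hb.comp_injective (fun a b hab => by omega)
    apply hcomp.congr
    intro j
    simp only [Function.comp_apply, hg, Real.norm_eq_abs, abs_div, abs_mul, abs_pow, abs_neg,
      abs_one, one_pow, one_mul, Nat.abs_cast]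
  have hmul := tsum_mul_tsum_eq_tsum_sum_range_of_summable_norm hfn hgn
  have hgs : ∑' j, g j = Real.sin y := (Real.hasSum_sin y).tsum_eq
  have hinner : ∀ n : ℕ, (∑ k ∈ range (n+1), f k * g (n-k)) = (-1)^n * y^(2*n+1) / (2*n)! := by
    intro n
    have hterm : ∀ k ∈ range (n+1), f k * g (n-k)
        = ((aQ k * ((-1:ℚ)^(n-k) / (2*(n-k)+1)!) : ℚ) : ℝ) * y^(2*n+1) := by
      intro k hk
      simp only [mem_range, Nat.lt_succ_iff] at hk
      have hexp : 2*k + (2*(n-k)+1) = 2*n+1 := by omega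
      simp only [hf, hg, aR]
      push_cast
      rw [← hexp, pow_add]
      ring
    rw [Finset.sum_congr rfl hterm, ← Finset.sum_mul, ← Rat.cast_sum, key_identity n]
    push_cast
    ring
  have hsum2 : ∑' n, (∑ k ∈ range (n+1), f k * g (n-k)) = y * Real.cos y := by
    have hc := (Real.hasSum_cos y).mul_left y
    have : ∀ n : ℕ, y * ((-1:ℝ)^n * y^(2*n) / (2*n)!) = (-1)^n * y^(2*n+1) / (2*n)! := by
      intro n; rw [pow_succ]; ring
    rw [funext hinner, ← funext this]
    exact hc.tsum_eq
  rw [hgs, hsum2] at hmul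
  have hfs : Summable f := hfn.of_norm
  have : ∑' k, f k = y * Real.cos y / Real.sin y := by
    field_simp
    linarith [hmul]
  exact this ▸ hfs.hasSum

lemma term_eq {x : ℝ} (hx : x ≠ 0) (n : ℕ) :
    (-1 : ℝ) ^ (n + 1) * 2 * ((2 : ℝ) ^ (2 * (n : ℤ) - 1) - 1)
        * ((bernoulli (2 * n) : ℚ) : ℝ) * x ^ (2 * (n : ℤ) - 1)
        / (Nat.factorial (2 * n) : ℝ)
    = (2/x) * (aR n * (x/2)^(2*n)) - (1/x) * (aR n * x^(2*n)) := by
  have hz1 : x ^ (2 * (n : ℤ) - 1) = x^(2*n) / x := by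
    rw [zpow_sub₀ hx, zpow_one]
    norm_cast
  have hz2 : (2:ℝ) ^ (2 * (n : ℤ) - 1) = 2^(2*n) / 2 := by
    rw [zpow_sub₀ (by norm_num : (2:ℝ) ≠ 0), zpow_one]
    norm_cast
  have h4 : (4:ℝ)^n = 2^(2*n) := by
    rw [show (4:ℝ) = 2^2 by norm_num, ← pow_mul]
  have hxp : (x/2)^(2*n) = x^(2*n) / 2^(2*n) := div_pow x 2 (2*n)
  have hfac : ((2*n)! : ℝ) ≠ 0 := Nat.cast_ne_zero.mpr (Nat.factorial_ne_zero _)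
  have h2n : (2:ℝ)^(2*n) ≠ 0 := by positivity
  rw [hz1, hz2, hxp]
  simp only [aR, aQ]
  push_cast
  rw [h4]
  field_simp
  ring

lemma sin_ne_zero_of_abs {y : ℝ} (h0 : 0 < |y|) (hy : |y| < π) : Real.sin y ≠ 0 := by
  have hy0 : y ≠ 0 := by simpa [abs_pos] using h0
  rcases lt_or_gt_of_ne hy0 with hneg | hpos
  · have h1 : Real.sin (-y) > 0 :=
      Real.sin_pos_of_pos_of_lt_pi (by linarith) (by rwa [abs_of_neg hneg] at hy)
    rw [Real.sin_neg] at h1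
    linarith
  · have h1 := Real.sin_pos_of_pos_of_lt_pi hpos (by rwa [abs_of_pos hpos] at hy)
    linarith

/-- For `0 < |x| < π`, the cosecant `1/sin x` equals the absolutely convergent Laurent series
`Σ_{n=0}^{∞} (−1)^{n+1} · 2 · (2^{2n−1} − 1) · B_{2n} · x^{2n−1} / (2n)!`
(with `2^{-1} = 1/2` and `x^{-1} = 1/x` for `n = 0`, via integer powers). -/
theorem csc_laurent_series (x : ℝ) (h0 : 0 < |x|) (hπ : |x| < π) :
    (Summable fun n : ℕ =>
      |(-1 : ℝ) ^ (n + 1) * 2 * ((2 : ℝ) ^ (2 * (n : ℤ) - 1) - 1)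
        * ((bernoulli (2 * n) : ℚ) : ℝ) * x ^ (2 * (n : ℤ) - 1)
        / (Nat.factorial (2 * n) : ℝ)|) ∧
    HasSum (fun n : ℕ =>
      (-1 : ℝ) ^ (n + 1) * 2 * ((2 : ℝ) ^ (2 * (n : ℤ) - 1) - 1)
        * ((bernoulli (2 * n) : ℚ) : ℝ) * x ^ (2 * (n : ℤ) - 1)
        / (Nat.factorial (2 * n) : ℝ))
      (1 / Real.sin x) := by
  have hπpos := Real.pi_pos
  have hx : x ≠ 0 := by simpa [abs_pos] using h0
  have hx2 : x/2 ≠ 0 := div_ne_zero hx two_ne_zero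
  have habs2 : |x/2| < π := by
    rw [abs_div, abs_two]
    linarith
  have habs2pos : 0 < |x/2| := abs_pos.mpr hx2
  have hsx : Real.sin x ≠ 0 := sin_ne_zero_of_abs h0 hπ
  have hsx2 : Real.sin (x/2) ≠ 0 := sin_ne_zero_of_abs habs2pos habs2
  have hs1 := hasSumA hx2 habs2 hsx2
  have hs2 := hasSumA hx hπ hsx
  have heq : (fun n : ℕ =>
      (-1 : ℝ) ^ (n + 1) * 2 * ((2 : ℝ) ^ (2 * (n : ℤ) - 1) - 1)
        * ((bernoulli (2 * n) : ℚ) : ℝ) * x ^ (2 * (n : ℤ) - 1)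
        / (Nat.factorial (2 * n) : ℝ))
      = fun n => (2/x) * (aR n * (x/2)^(2*n)) - (1/x) * (aR n * x^(2*n)) :=
    funext (term_eq hx)
  constructor
  · have s1 := (summableA habs2).mul_left (2/|x|)
    have s2 := (summableA hπ).mul_left (1/|x|)
    refine Summable.of_nonneg_of_le (fun n => abs_nonneg _) (fun n => ?_) (s1.add s2)
    rw [congrFun heq n]
    calc |(2/x) * (aR n * (x/2)^(2*n)) - (1/x) * (aR n * x^(2*n))|
        ≤ |(2/x) * (aR n * (x/2)^(2*n))| + |(1/x) * (aR n * x^(2*n))| := abs_sub _ _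
    _ = 2/|x| * |aR n * (x/2)^(2*n)| + 1/|x| * |aR n * x^(2*n)| := by
        have habsd : ∀ (a b c : ℝ), |a / b * c| = |a| / |b| * |c| := fun a b c => by
          rw [abs_mul, abs_div]
        rw [habsd, habsd, abs_two, abs_one]
  · have H := (hs1.mul_left (2/x)).sub (hs2.mul_left (1/x))
    have hkey : Real.sin (x/2) = Real.sin x * Real.cos (x/2) - Real.cos x * Real.sin (x/2) := by
      have h := Real.sin_sub x (x/2)
      rw [show x - x/2 = x/2 by ring] at h
      linarith
    have hV : (2/x) * (x/2 * Real.cos (x/2) / Real.sin (x/2)) - (1/x) * (x * Real.cos x / Real.sin x)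
        = 1 / Real.sin x := by
      have e1 : (2/x) * (x/2 * Real.cos (x/2) / Real.sin (x/2))
          = Real.cos (x/2) / Real.sin (x/2) := by
        rcases eq_or_ne (Real.sin (x/2)) 0 with hs | hs
        · simp [hs]
        · field_simp
      have e2 : (1/x) * (x * Real.cos x / Real.sin x) = Real.cos x / Real.sin x := by
        rcases eq_or_ne (Real.sin x) 0 with hs | hs
        · simp [hs]
        · field_simp
      rw [e1, e2, div_sub_div _ _ hsx2 hsx, div_eq_div_iff (mul_ne_zero hsx2 hsx) hsx]
      linear_combination (-(Real.sin x)) * hkey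
    rw [heq]
    exact hV ▸ H
end

section
/- For every real number x with 0 < |x| < π, the cotangent function admits the convergent Laurent series cot(x) = Σ_{n=0}^{∞} (−1)^{n} · 2^{2n} · B_{2n} · x^{2n−1} / (2n)!, where the series converges absolutely. -/
open Real

private lemma zeta_le_aux (m : ℕ) (hm : 1 ≤ m) :
    ∑' n : ℕ, 1 / (n : ℝ) ^ (2 * m) ≤ π ^ 2 / 6 := by
  have h2 := hasSum_zeta_two
  have hm' := hasSum_zeta_nat (k := m) (by omega)
  refine le_of_le_of_eq (hm'.summable.tsum_le_tsum (fun n => ?_) h2.summable) h2.tsum_eq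
  rcases Nat.eq_zero_or_pos n with rfl | hn
  · simp [zero_pow (by omega : 2 * m ≠ 0)]
  · have h1 : (1:ℝ) ≤ (n:ℝ) := by exact_mod_cast hn
    have : (n:ℝ) ^ 2 ≤ (n:ℝ) ^ (2 * m) := pow_le_pow_right₀ h1 (by omega)
    exact one_div_le_one_div_of_le (by positivity) this

private lemma bernoulli_bound_aux (m : ℕ) (hm : 1 ≤ m) :
    |((bernoulli (2*m) : ℚ) : ℝ)| / (2*m).factorial ≤ (π^2 / 3) / (2*π) ^ (2*m) := by
  have hz := hasSum_zeta_nat (k := m) (by omega)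
  have hpos : (0:ℝ) ≤ ∑' n : ℕ, 1 / (n : ℝ) ^ (2*m) := tsum_nonneg (fun n => by positivity)
  have heq := hz.tsum_eq
  have h1 : (∑' n : ℕ, 1/(n:ℝ)^(2*m))
      = 2^(2*m-1) * π^(2*m) * |((bernoulli (2*m) : ℚ) : ℝ)| / (2*m).factorial := by
    rw [← abs_of_nonneg hpos, heq]
    simp [abs_mul, abs_div, abs_pow, abs_of_nonneg pi_pos.le, Nat.abs_cast]
  have hfac : (0:ℝ) < ((2*m).factorial : ℝ) := by exact_mod_cast (2*m).factorial_pos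
  have hpow2 : (2:ℝ)^(2*m) = 2 * 2^(2*m-1) := by
    rw [← pow_succ']; congr 1; omega
  have h2 : |((bernoulli (2*m) : ℚ) : ℝ)| / (2*m).factorial
      = (∑' n : ℕ, 1/(n:ℝ)^(2*m)) * 2 / (2*π)^(2*m) := by
    rw [h1, mul_pow, hpow2]
    field_simp
  rw [h2]
  gcongr
  linarith [zeta_le_aux m hm]

private lemma bernoulli_conv_aux (n : ℕ) :
    ∑ p ∈ Finset.HasAntidiagonal.antidiagonal n,
      (bernoulli p.1 / p.1.factorial : ℚ) * (if p.2 = 0 then (0:ℚ) else 1 / (p.2.factorial : ℚ)) =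
      if n = 1 then 1 else 0 := by
  have h := congrArg (PowerSeries.coeff n) (bernoulliPowerSeries_mul_exp_sub_one ℚ)
  rw [PowerSeries.coeff_mul, PowerSeries.coeff_X] at h
  rw [← h]
  refine Finset.sum_congr rfl fun p hp => ?_
  rw [map_sub, PowerSeries.coeff_exp, PowerSeries.coeff_one, bernoulliPowerSeries,
    PowerSeries.coeff_mk]
  simp only [Algebra.algebraMap_self_apply]
  split_ifs with h0
  · simp [h0]
  · ring

/-- For `0 < |x| < π`, the cotangent `cos x / sin x` equals the absolutely convergent Laurent
series `Σ_{n=0}^{∞} (−1)^n · 2^{2n} · B_{2n} · x^{2n−1} / (2n)!` (the `n = 0` term is `1/x`,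
via integer powers). -/
theorem cot_laurent_series (x : ℝ) (h0 : 0 < |x|) (hπ : |x| < π) :
    (Summable fun n : ℕ =>
      |(-1 : ℝ) ^ n * (2 : ℝ) ^ (2 * n) * ((bernoulli (2 * n) : ℚ) : ℝ)
        * x ^ (2 * (n : ℤ) - 1) / (Nat.factorial (2 * n) : ℝ)|) ∧
    HasSum (fun n : ℕ =>
      (-1 : ℝ) ^ n * (2 : ℝ) ^ (2 * n) * ((bernoulli (2 * n) : ℚ) : ℝ)
        * x ^ (2 * (n : ℤ) - 1) / (Nat.factorial (2 * n) : ℝ))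
      (Real.cos x / Real.sin x) := by
  have hx0 : x ≠ 0 := by
    intro h; rw [h] at h0; simp at h0
  have hπpos := pi_pos
  set w : ℂ := 2 * Complex.I * (x:ℂ) with hw
  have hwnorm : ‖w‖ = 2 * |x| := by
    rw [hw]
    simp [map_mul]
  set a : ℕ → ℂ := fun n => ((bernoulli n : ℚ) : ℂ) / (n.factorial : ℂ) * w ^ n with ha_def
  -- norm of a n
  have hnorm : ∀ n, ‖a n‖ = |((bernoulli n : ℚ) : ℝ)| / (n.factorial : ℝ) * (2*|x|) ^ n := by
    intro n
    rw [ha_def]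
    simp only [norm_mul, norm_div, norm_pow, hwnorm]
    norm_num [Complex.norm_ratCast, Complex.norm_natCast]
  -- summability of norms
  have hanorm : Summable fun n => ‖a n‖ := by
    set ρ : ℝ := |x| / π with hρ
    have hρ0 : 0 ≤ ρ := by positivity
    have hρ1 : ρ < 1 := by rw [hρ, div_lt_one hπpos]; exact hπ
    have hπ3 : (3:ℝ) < π := pi_gt_three
    have hC : ∀ n, ‖a n‖ ≤ (π^2/3 + π + 1) * ρ ^ n := by
      intro n
      rw [hnorm n]
      rcases Nat.even_or_odd n with ⟨m, hm⟩ | ⟨m, hm⟩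
      · rcases Nat.eq_zero_or_pos m with rfl | hm1
        · have hn0 : n = 0 := by omega
          subst hn0
          simp only [pow_zero, mul_one]
          norm_num [bernoulli_zero]
          nlinarith
        · have hn2 : n = 2*m := by omega
          subst hn2
          have hb := bernoulli_bound_aux m hm1
          have h2 : (0:ℝ) ≤ (2*|x|) ^ (2*m) := by positivity
          calc |((bernoulli (2*m) : ℚ) : ℝ)| / ((2*m).factorial : ℝ) * (2*|x|) ^ (2*m)
              ≤ (π^2/3) / (2*π)^(2*m) * (2*|x|) ^ (2*m) := by gcongr
            _ = (π^2/3) * ρ ^ (2*m) := by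
                rw [hρ, div_pow, mul_pow, mul_pow]
                field_simp
            _ ≤ (π^2/3 + π + 1) * ρ ^ (2*m) := by nlinarith [pow_nonneg hρ0 (2*m)]
      · rcases Nat.eq_zero_or_pos m with rfl | hm1
        · have hn1 : n = 1 := by omega
          subst hn1
          simp only [pow_one, Nat.factorial_one, Nat.cast_one, div_one]
          rw [show ((bernoulli 1 : ℚ) : ℝ) = -(1/2) by rw [bernoulli_one]; norm_num]
          rw [abs_neg, abs_of_nonneg (by norm_num : (0:ℝ) ≤ 1/2), hρ, mul_div_assoc',
            le_div_iff₀ hπpos]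
          nlinarith [abs_nonneg x]
        · have hodd : bernoulli n = 0 := by
            rw [bernoulli_eq_bernoulli'_of_ne_one (by omega)]
            exact bernoulli'_eq_zero_of_odd ⟨m, by omega⟩ (by omega)
          rw [hodd]
          simp only [Rat.cast_zero, abs_zero, zero_div, zero_mul]
          positivity
    exact Summable.of_nonneg_of_le (fun n => norm_nonneg _) hC
      ((summable_geometric_of_lt_one hρ0 hρ1).mul_left _)
  have hsa : Summable a := hanorm.of_norm
  -- the exponential series
  have hexp : HasSum (fun n : ℕ => w ^ n / (n.factorial : ℂ)) (Complex.exp w) := by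
    rw [Complex.exp_eq_exp_ℂ]
    exact NormedSpace.expSeries_div_hasSum_exp w
  set b : ℕ → ℂ := fun m => if m = 0 then 0 else w ^ m / (m.factorial : ℂ) with hb_def
  have hb : HasSum b (Complex.exp w - 1) := by
    have h1 : HasSum (fun n : ℕ => w ^ (n+1) / ((n+1).factorial : ℂ)) (Complex.exp w - 1) := by
      rw [hasSum_nat_add_iff (f := fun n : ℕ => w ^ n / (n.factorial : ℂ)) 1]
      simpa using hexp
    have h3 : HasSum (fun n : ℕ => b (n+1)) (Complex.exp w - 1) := by
      refine h1.congr_fun fun n => ?_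
      simp [hb_def]
    have h4 := h3.zero_add
    simpa [hb_def] using h4
  have hbnorm : Summable fun n => ‖b n‖ := by
    refine Summable.of_nonneg_of_le (fun n => norm_nonneg _) (fun n => ?_)
      (Real.summable_pow_div_factorial ‖w‖)
    rcases eq_or_ne n 0 with rfl | h
    · simp [hb_def]
    · simp [hb_def, h, norm_div, norm_pow]
  -- Cauchy product
  have hprod : (∑' n, a n) * (Complex.exp w - 1) = w := by
    rw [← hb.tsum_eq, tsum_mul_tsum_eq_tsum_sum_antidiagonal_of_summable_norm hanorm hbnorm]
    have hterm : ∀ n : ℕ, (∑ p ∈ Finset.HasAntidiagonal.antidiagonal n, a p.1 * b p.2)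
        = if n = 1 then w else 0 := by
      intro n
      have hq := bernoulli_conv_aux n
      have hstep : (∑ p ∈ Finset.HasAntidiagonal.antidiagonal n, a p.1 * b p.2)
          = (((∑ p ∈ Finset.HasAntidiagonal.antidiagonal n, (bernoulli p.1 / p.1.factorial : ℚ)
              * (if p.2 = 0 then (0:ℚ) else 1 / (p.2.factorial : ℚ))) : ℚ) : ℂ) * w ^ n := by
        rw [Rat.cast_sum, Finset.sum_mul]
        refine Finset.sum_congr rfl fun p hp => ?_
        rw [Finset.HasAntidiagonal.mem_antidiagonal] at hp
        simp only [ha_def, hb_def]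
        split_ifs with h
        · simp
        · push_cast
          rw [← hp, pow_add]
          ring
      rw [hstep, hq]
      split_ifs with h
      · subst h; simp
      · simp
    rw [tsum_congr hterm]
    exact tsum_ite_eq 1 (fun _ => w)
  -- exp w ≠ 1
  have hE : Complex.exp w ≠ 1 := by
    intro hone
    rw [Complex.exp_eq_one_iff] at hone
    obtain ⟨k, hk⟩ := hone
    have him := congrArg Complex.im hk
    simp [hw, Complex.mul_im, Complex.mul_re, Complex.ofReal_re, Complex.ofReal_im] at him
    -- him : 2 * x = k * (2 * π)  (roughly)
    have hxk : x = k * π := by linarith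
    rcases eq_or_ne k 0 with rfl | hk0
    · rw [hxk] at hx0; simp at hx0
    · have h1 : (1:ℝ) ≤ |(k:ℝ)| := by
        exact_mod_cast Int.one_le_abs hk0
      have : π ≤ |x| := by
        rw [hxk, abs_mul, abs_of_nonneg hπpos.le]
        nlinarith
      linarith
  have hE1 : Complex.exp w - 1 ≠ 0 := sub_ne_zero.mpr hE
  -- cotangent relation
  have hcot : w / (Complex.exp w - 1)
      = (x:ℂ) * (Complex.cos x / Complex.sin x) - Complex.I * x := by
    have h1 : Complex.cot x = (Complex.exp w + 1) / (Complex.I * (1 - Complex.exp w)) := by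
      rw [hw]; exact Complex.cot_eq_exp_ratio (x:ℂ)
    rw [← Complex.cot_eq_cos_div_sin, h1, hw]
    have hE2 : 1 - Complex.exp w ≠ 0 := fun h => hE (by linear_combination -h)
    rw [hw] at hE1 hE2
    field_simp
    linear_combination ((x:ℂ) - (x:ℂ) * Complex.exp (2*Complex.I*(x:ℂ)) ^ 2) * Complex.I_sq
  have hsum : HasSum a ((x:ℂ) * (Complex.cos x / Complex.sin x) - Complex.I * x) := by
    have hta : (∑' n, a n) = w / (Complex.exp w - 1) := by
      rw [eq_div_iff hE1]; exact hprod
    have := hsa.hasSum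
    rw [hta, hcot] at this
    exact this
  -- odd part
  have hodd : HasSum (fun m : ℕ => a (2*m+1)) (-(Complex.I * x)) := by
    have h1 : HasSum (fun m : ℕ => a (2*m+1)) (a (2*0+1)) := by
      refine hasSum_single 0 fun m hm => ?_
      have hbz : bernoulli (2*m+1) = 0 := by
        rw [bernoulli_eq_bernoulli'_of_ne_one (by omega)]
        exact bernoulli'_eq_zero_of_odd ⟨m, by omega⟩ (by omega)
      simp [ha_def, hbz]
    have ha1 : a (2*0+1) = -(Complex.I * x) := by
      simp only [ha_def]
      norm_num [bernoulli_one, hw]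
      push_cast
      ring
    rwa [ha1] at h1
  have hevens : Summable (fun m : ℕ => a (2*m)) :=
    hsa.comp_injective (fun p q h => by omega)
  have heven : HasSum (fun m : ℕ => a (2*m)) ((x:ℂ) * (Complex.cos x / Complex.sin x)) := by
    have h1 := hevens.hasSum.even_add_odd hodd
    have h2 := hsum.unique h1
    have h3 : (∑' m, a (2*m)) = (x:ℂ) * (Complex.cos x / Complex.sin x) := by
      linear_combination -h2
    rw [← h3]
    exact hevens.hasSum
  -- identify a (2m) with real coefficients
  set c : ℕ → ℝ := fun n => (-1 : ℝ) ^ n * (2 : ℝ) ^ (2 * n) * ((bernoulli (2 * n) : ℚ) : ℝ)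
        * x ^ (2 * (n : ℤ) - 1) / (Nat.factorial (2 * n) : ℝ) with hc
  have hxpow : ∀ m : ℕ, x ^ (2*(m:ℤ)-1) * x = x ^ (2*m) := by
    intro m
    have h1 : (2*(m:ℤ)) = ((2*m : ℕ) : ℤ) := by push_cast; ring
    calc x ^ (2*(m:ℤ)-1) * x = x ^ (2*(m:ℤ)-1) * x ^ (1:ℤ) := by rw [zpow_one]
      _ = x ^ (2*(m:ℤ)) := by rw [← zpow_add₀ hx0]; ring_nf
      _ = x ^ (2*m) := by rw [h1, zpow_natCast]
  have hkey : ∀ m : ℕ, a (2*m) = ((c m * x : ℝ) : ℂ) := by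
    intro m
    have hcm : c m * x = (-1:ℝ)^m * 2^(2*m) * ((bernoulli (2*m):ℚ):ℝ) * x^(2*m)
        / ((2*m).factorial : ℝ) := by
      rw [hc, ← hxpow m]; ring
    rw [hcm]
    simp only [ha_def]
    have hwpow : w ^ (2*m) = 2^(2*m) * ((-1:ℂ))^m * (x:ℂ)^(2*m) := by
      rw [hw, show ((2:ℂ) * Complex.I * (x:ℂ)) ^ (2*m)
        = 2^(2*m) * (Complex.I^2)^m * (x:ℂ)^(2*m) by rw [← pow_mul]; ring, Complex.I_sq]
    rw [hwpow]
    push_cast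
    ring
  -- transfer to ℝ
  have heven' : HasSum (fun m : ℕ => c m * x) (x * (Real.cos x / Real.sin x)) := by
    apply Complex.hasSum_ofReal.mp
    have hv : ((x * (Real.cos x / Real.sin x) : ℝ) : ℂ)
        = (x:ℂ) * (Complex.cos x / Complex.sin x) := by push_cast; ring
    rw [hv]
    exact heven.congr_fun fun m => (hkey m).symm
  constructor
  · have hs2 : Summable fun m : ℕ => ‖a (2*m)‖ :=
      hanorm.comp_injective (fun p q h => by omega)
    have habs : ∀ m : ℕ, |c m| = ‖a (2*m)‖ / |x| := by
      intro m
      rw [hkey m, Complex.norm_real, Real.norm_eq_abs, abs_mul]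
      field_simp
    exact (hs2.div_const |x|).congr (fun m => (habs m).symm)
  · have hfin := heven'.div_const x
    have hfun : ∀ m : ℕ, c m * x / x = c m := fun m => by
      rw [mul_div_cancel_right₀ _ hx0]
    have hval : x * (Real.cos x / Real.sin x) / x = Real.cos x / Real.sin x :=
      mul_div_cancel_left₀ _ hx0
    rw [hval] at hfin
    exact hfin.congr_fun fun m => (hfun m).symm
end

section
/- For every real number x with |x| < π/2, the tangent function admits the convergent Taylor series tan(x) = Σ_{k=0}^{∞} a_{2k+1} · x^{2k+1}, where a_{2k+1} = (−4)^{k+1} · (1 − 4^{k+1}) · B_{2k+2} / (2k+2)! and the series converges absolutely. -/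
open Real

section TanTaylorAux
open PowerSeries Complex

noncomputable def tanC (n : ℕ) : ℝ :=
  if Even n then 0 else
    (-4 : ℝ) ^ ((n+1)/2) * (1 - (4:ℝ) ^ ((n+1)/2)) * ((bernoulli (n+1) : ℚ) : ℝ)
      / (Nat.factorial (n+1) : ℝ)

noncomputable def cosC (n : ℕ) : ℝ :=
  if Even n then (-1 : ℝ) ^ (n/2) / (Nat.factorial n : ℝ) else 0

noncomputable def sinC (n : ℕ) : ℝ :=
  if Even n then 0 else (-1 : ℝ) ^ (n/2) / (Nat.factorial n : ℝ)

noncomputable def AF : ℂ⟦X⟧ := PowerSeries.mk fun n => (tanC n : ℂ)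
noncomputable def CF : ℂ⟦X⟧ := PowerSeries.mk fun n => (cosC n : ℂ)
noncomputable def SF : ℂ⟦X⟧ := PowerSeries.mk fun n => (sinC n : ℂ)
noncomputable def EF (c : ℂ) : ℂ⟦X⟧ := rescale c (PowerSeries.exp ℂ)
noncomputable def JF : ℂ⟦X⟧ := PowerSeries.C (R := ℂ) I

lemma rescale_X' (c : ℂ) : rescale c (X : ℂ⟦X⟧) = PowerSeries.C (R := ℂ) c * X := by
  ext n
  rcases eq_or_ne n 1 with rfl | hn
  · simp [coeff_rescale, coeff_X]
  · simp [coeff_rescale, coeff_X, hn]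

lemma hB (c : ℂ) :
    rescale c (bernoulliPowerSeries ℂ) * (EF c - 1) = PowerSeries.C (R := ℂ) c * X := by
  have := congrArg (rescale c) (bernoulliPowerSeries_mul_exp_sub_one ℂ)
  rw [map_mul, map_sub, map_one, rescale_X'] at this
  exact this

lemma hEmul (a b : ℂ) : EF a * EF b = EF (a + b) :=
  PowerSeries.exp_mul_exp_eq_exp_add a b

lemma hE0 : EF 0 = 1 := by
  simp [EF, rescale_zero]

lemma constCoeff_EF (c : ℂ) : PowerSeries.constantCoeff (R := ℂ) (EF c) = 1 := by
  rw [← coeff_zero_eq_constantCoeff_apply]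
  simp [EF, coeff_rescale]

lemma EF_ne_zero (c : ℂ) : EF c ≠ 0 := fun h => by
  have := constCoeff_EF c
  rw [h] at this
  simp at this

lemma C_two : (PowerSeries.C (R := ℂ)) 2 = (2 : ℂ⟦X⟧) :=
  map_ofNat _ 2

lemma hA : X * AF = rescale (2*I) (bernoulliPowerSeries ℂ)
    - rescale (4*I) (bernoulliPowerSeries ℂ) - JF * X := by
  ext n
  rw [map_sub, map_sub]
  match n with
  | 0 =>
    simp [coeff_zero_eq_constantCoeff_apply, map_mul, coeff_rescale, bernoulliPowerSeries, JF]
  | 1 =>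
    rw [coeff_succ_X_mul]
    simp [AF, tanC, coeff_rescale, bernoulliPowerSeries, JF, coeff_X, bernoulli_one,
      coeff_C_mul, eq_ratCast]
    push_cast
    ring
  | (n+2) =>
    rw [coeff_succ_X_mul]
    have hX2 : (PowerSeries.coeff (R := ℂ) (n+2)) (JF * X) = 0 := by
      simp [JF, coeff_C_mul, coeff_X]
    rw [hX2]
    rcases Nat.even_or_odd (n+2) with he | ho
    · obtain ⟨m, hm⟩ := he
      have hm2 : n + 2 = 2 * m := by omega
      have hne : ¬ Even (n+1) := by
        rw [Nat.even_add_one, not_not]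
        exact Nat.even_iff.mpr (by omega)
      have h12 : (n+1+1)/2 = m := by omega
      simp only [AF, coeff_mk, tanC, if_neg hne, h12, coeff_rescale, bernoulliPowerSeries,
        eq_ratCast]
      have e1 : ((2:ℂ)*I)^(n+2) = (-4 : ℂ)^m := by
        rw [hm2, pow_mul]
        norm_num [mul_pow, I_sq]
      have e2 : ((4:ℂ)*I)^(n+2) = (-4 : ℂ)^m * (4:ℂ)^m := by
        rw [hm2, pow_mul, ← mul_pow]
        norm_num [mul_pow, I_sq]
      rw [e1, e2, show n+1+1 = n+2 by omega]
      push_cast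
      ring
    · have hb : bernoulli (n+2) = 0 := by
        rw [bernoulli_eq_bernoulli'_of_ne_one (by omega)]
        exact bernoulli'_eq_zero_of_odd ho (by omega)
      have hne : Even (n+1) := by
        rcases ho with ⟨m, hm⟩
        exact ⟨m, by omega⟩
      simp [AF, coeff_mk, tanC, if_pos hne, coeff_rescale, bernoulliPowerSeries, hb]

lemma hCos : 2 * CF = EF I + EF (-I) := by
  ext n
  rw [map_add, show (2:ℂ⟦X⟧) = PowerSeries.C (R := ℂ) 2 from C_two.symm, coeff_C_mul]
  simp only [CF, coeff_mk, EF, coeff_rescale, coeff_exp, eq_ratCast, cosC]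
  rcases Nat.even_or_odd n with he | ho
  · obtain ⟨m, hm⟩ := he
    have hm2 : n = 2 * m := by omega
    have h2 : n / 2 = m := by omega
    rw [if_pos ⟨m, hm⟩, h2, hm2]
    have e1 : (I:ℂ)^(2*m) = (-1 : ℂ)^m := by rw [pow_mul, I_sq]
    have e2 : (-I:ℂ)^(2*m) = (-1 : ℂ)^m := by rw [pow_mul]; norm_num [I_sq]
    rw [e1, e2]
    push_cast
    ring
  · rw [if_neg (by simpa using Nat.not_even_iff_odd.mpr ho)]
    have e2 : (-I:ℂ)^n = -(I^n) := by
      rcases ho with ⟨m, hm⟩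
      rw [hm]
      rw [neg_pow]
      simp [pow_mul, pow_succ]
    rw [e2]
    push_cast
    ring

lemma hSin : 2 * JF * SF = EF I - EF (-I) := by
  ext n
  rw [map_sub, show (2:ℂ⟦X⟧)*JF = PowerSeries.C (R := ℂ) (2*I) by rw [JF, ← C_two, ← map_mul],
    coeff_C_mul]
  simp only [SF, coeff_mk, EF, coeff_rescale, coeff_exp, eq_ratCast, sinC]
  rcases Nat.even_or_odd n with he | ho
  · obtain ⟨m, hm⟩ := he
    rw [if_pos ⟨m, hm⟩]
    have e2 : (-I:ℂ)^n = I^n := by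
      rw [show n = 2*m by omega, pow_mul, pow_mul]
      norm_num [I_sq]
    rw [e2]
    push_cast
    ring
  · rw [if_neg (by simpa using Nat.not_even_iff_odd.mpr ho)]
    obtain ⟨m, hm⟩ := ho
    have h2 : n / 2 = m := by omega
    have e2 : (-I:ℂ)^n = -(I^n) := by
      rw [hm, neg_pow]
      simp [pow_mul, pow_succ]
    have e1 : (I:ℂ)^n = (-1:ℂ)^m * I := by
      rw [hm, pow_succ, pow_mul, I_sq]
    rw [e2, e1, h2]
    push_cast
    ring

lemma hI2 : JF * JF = -1 := by
  rw [JF, ← map_mul, I_mul_I, map_neg, map_one]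

lemma formal_main : AF * CF = SF := by
  set B2 := rescale (2*I) (bernoulliPowerSeries ℂ) with hB2def
  set B4 := rescale (4*I) (bernoulliPowerSeries ℂ) with hB4def
  set E2 := EF (2*I) with hE2def
  set E4 := EF (4*I) with hE4def
  have r1 : B2 * (E2 - 1) = 2 * JF * X := by
    have := hB (2*I)
    rwa [show PowerSeries.C (R := ℂ) (2*I) = 2 * JF by rw [JF, ← C_two, ← map_mul]] at this
  have r2 : B4 * (E4 - 1) = 4 * JF * X := by
    have := hB (4*I)
    rwa [show PowerSeries.C (R := ℂ) (4*I) = 4 * JF by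
      rw [JF, (map_ofNat (PowerSeries.C (R := ℂ)) 4).symm, ← map_mul]] at this
  have q3 : EF I * EF I = E2 := by
    rw [hEmul, show I + I = 2*I by ring]
  have q4 : E2 * E2 = E4 := by
    rw [hE2def, hE4def, hEmul, show (2:ℂ)*I + 2*I = 4*I by ring]
  have q5 : EF I * EF (-I) = 1 := by
    rw [hEmul, add_neg_cancel, hE0]
  have h2 : B2 - B4 - JF * X = X * AF := hA.symm
  have key1 : ((X*AF)*(E2+1)*(2*JF)) * ((E2-1)^2) = (2*X*(E2-1)) * ((E2-1)^2) := by
    linear_combination (-2*JF*(E2+1)*(E2-1)^2)*h2 + (2*JF*(E2+1)*(E2-1))*r1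
      + (-2*JF*(E2-1))*r2 + (-2*JF*B4*(E2-1))*q4
      + (4*X*(E2+1)*(E2-1) - 8*X*(E2-1) - 2*X*(E2+1)*(E2-1)^2)*hI2
  have hE2ne : E2 - 1 ≠ 0 := by
    intro hc
    have := congrArg (PowerSeries.coeff (R := ℂ) 1) hc
    simp [hE2def, EF, coeff_rescale, coeff_exp, eq_ratCast, coeff_one] at this
  have key2 : (X*AF)*(E2+1)*(2*JF) = 2*X*(E2-1) :=
    mul_right_cancel₀ (pow_ne_zero 2 hE2ne) key1
  have hJne : JF ≠ 0 := by
    intro hc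
    have := congrArg (PowerSeries.constantCoeff (R := ℂ)) hc
    simp [JF] at this
  have h2ne : (2 : ℂ⟦X⟧) ≠ 0 := by
    intro hc
    have := congrArg (PowerSeries.constantCoeff (R := ℂ)) hc
    rw [map_ofNat, map_zero] at this
    exact two_ne_zero this
  have key3 : (2*JF*2*X*EF I) * (AF*CF) = (2*JF*2*X*EF I) * SF := by
    linear_combination (2*JF*X*EF I*AF)*hCos - (2*X*EF I)*hSin
      + (2*JF*X*AF - 2*X)*q3 + (2*JF*X*AF + 2*X)*q5 + key2
  exact mul_left_cancel₀ (by
    refine mul_ne_zero (mul_ne_zero (mul_ne_zero (mul_ne_zero h2ne hJne) h2ne) X_ne_zero)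
      (EF_ne_zero I)) key3

lemma coeffId (n : ℕ) :
    ∑ p ∈ Finset.HasAntidiagonal.antidiagonal n, tanC p.1 * cosC p.2 = sinC n := by
  have h := congrArg (PowerSeries.coeff (R := ℂ) n) formal_main
  rw [coeff_mul] at h
  simp only [AF, CF, SF, coeff_mk] at h
  exact_mod_cast h

open Real in
lemma bern_bound (m : ℕ) (hm : 1 ≤ m) :
    |((bernoulli (2*m) : ℚ) : ℝ)| ≤ 4 * (Nat.factorial (2*m) : ℝ) / (2*π)^(2*m) := by
  have hs := hasSum_zeta_nat (k := m) (by omega)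
  set S : ℝ := (-1 : ℝ) ^ (m + 1) * 2 ^ (2 * m - 1) * π ^ (2 * m) *
      ((bernoulli (2 * m) : ℚ) : ℝ) / ((2 * m).factorial : ℝ) with hSdef
  have h0 : 0 ≤ S := by
    rw [← hs.tsum_eq]
    exact tsum_nonneg fun n => by positivity
  have hle : S ≤ 2 := by
    have h1 : S = ∑' n : ℕ, 1 / (n : ℝ) ^ (2 * m) := hs.tsum_eq.symm
    have h2 : ∑' n : ℕ, 1 / (n : ℝ) ^ (2 * m) ≤ ∑' n : ℕ, 1 / (n : ℝ) ^ 2 := by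
      refine Summable.tsum_le_tsum (fun n => ?_) hs.summable hasSum_zeta_two.summable
      rcases Nat.eq_zero_or_pos n with rfl | hn
      · norm_num [zero_pow (by omega : 2 * m ≠ 0)]
      · apply one_div_le_one_div_of_le (by positivity)
        exact_mod_cast Nat.pow_le_pow_right hn (by omega)
    have h3 : ∑' n : ℕ, 1 / (n : ℝ) ^ 2 = π ^ 2 / 6 := hasSum_zeta_two.tsum_eq
    have h4 : π ^ 2 / 6 ≤ 2 := by nlinarith [pi_lt_d2, pi_pos]
    linarith
  have habs : |S| = 2 ^ (2*m - 1) * π ^ (2*m) * |((bernoulli (2*m) : ℚ) : ℝ)|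
      / (Nat.factorial (2*m) : ℝ) := by
    rw [hSdef, _root_.abs_div, _root_.abs_mul, _root_.abs_mul, _root_.abs_mul, _root_.abs_pow, _root_.abs_pow, _root_.abs_pow, _root_.abs_neg, abs_one,
      one_pow, one_mul, _root_.abs_of_nonneg (by norm_num : (0:ℝ) ≤ 2), _root_.abs_of_nonneg pi_pos.le,
      _root_.abs_of_nonneg (by positivity : (0:ℝ) ≤ (Nat.factorial (2*m) : ℝ))]
  have hS2 : |S| ≤ 2 := _root_.abs_le.mpr ⟨by linarith, hle⟩
  rw [habs] at hS2
  have hpow : (2*π)^(2*m) = 2 * (2 ^ (2*m-1) * π ^ (2*m)) := by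
    obtain ⟨j, hj⟩ : ∃ j, 2*m = j+1 := ⟨2*m-1, by omega⟩
    rw [hj, Nat.add_sub_cancel, mul_pow, pow_succ]
    ring
  have hfac : (0:ℝ) < (Nat.factorial (2*m) : ℝ) := by positivity
  have hppos : (0:ℝ) < 2 ^ (2*m-1) * π ^ (2*m) := by positivity
  rw [div_le_iff₀ hfac] at hS2
  rw [hpow, le_div_iff₀ (by positivity)]
  nlinarith [hS2]

open Real in
lemma tanC_bound (n : ℕ) : |tanC n| ≤ 4 * (2/π) ^ (n+1) := by
  rcases Nat.even_or_odd n with he | ho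
  · rw [tanC, if_pos he, _root_.abs_zero]
    positivity
  · rw [tanC, if_neg (by simpa using Nat.not_even_iff_odd.mpr ho)]
    obtain ⟨k, hk⟩ := ho
    have h12 : (n+1)/2 = k+1 := by omega
    have h2K : n + 1 = 2 * (k+1) := by omega
    have hb : |((bernoulli (n+1) : ℚ) : ℝ)| ≤ 4 * (Nat.factorial (n+1) : ℝ) / (2*π)^(n+1) := by
      rw [h2K]
      exact bern_bound (k+1) (by omega)
    have h1 : |(-4 : ℝ) ^ ((n+1)/2) * (1 - (4:ℝ) ^ ((n+1)/2)) * ((bernoulli (n+1) : ℚ) : ℝ)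
        / (Nat.factorial (n+1) : ℝ)|
        = (4:ℝ)^(k+1) * |1 - (4:ℝ)^(k+1)| * |((bernoulli (n+1) : ℚ) : ℝ)|
          / (Nat.factorial (n+1) : ℝ) := by
      rw [h12, _root_.abs_div, _root_.abs_mul, _root_.abs_mul, _root_.abs_pow, _root_.abs_neg,
        _root_.abs_of_nonneg (by norm_num : (0:ℝ) ≤ 4),
        _root_.abs_of_nonneg (by positivity : (0:ℝ) ≤ (Nat.factorial (n+1) : ℝ))]
    rw [h1]
    have hone : (1:ℝ) ≤ (4:ℝ)^(k+1) := one_le_pow₀ (by norm_num)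
    have h2 : |1 - (4:ℝ)^(k+1)| ≤ (4:ℝ)^(k+1) := by
      rw [_root_.abs_sub_comm, _root_.abs_of_nonneg (by linarith)]
      linarith
    have hfac : (0:ℝ) < (Nat.factorial (n+1) : ℝ) := by positivity
    have step1 : (4:ℝ)^(k+1) * |1 - (4:ℝ)^(k+1)| * |((bernoulli (n+1) : ℚ) : ℝ)|
          / (Nat.factorial (n+1) : ℝ)
        ≤ (4:ℝ)^(k+1) * (4:ℝ)^(k+1) * (4 * (Nat.factorial (n+1) : ℝ) / (2*π)^(n+1))
          / (Nat.factorial (n+1) : ℝ) := by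
      gcongr
    have step2 : (4:ℝ)^(k+1) * (4:ℝ)^(k+1) * (4 * (Nat.factorial (n+1) : ℝ) / (2*π)^(n+1))
          / (Nat.factorial (n+1) : ℝ) = 4 * (2/π) ^ (n+1) := by
      have h44 : (4:ℝ)^(k+1) * (4:ℝ)^(k+1) = 4^(n+1) := by
        rw [← pow_add]
        congr 1
        omega
      rw [h44, div_pow, mul_pow, show (4:ℝ)^(n+1) = 2^(n+1) * 2^(n+1) by
        rw [show (4:ℝ) = 2*2 by norm_num, mul_pow]]
      have hpi : π ^ (n+1) ≠ 0 := by positivity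
      field_simp
    linarith

open Real in
lemma summable_tan_abs (x : ℝ) (h : |x| < π/2) : Summable fun n : ℕ => |tanC n * x ^ n| := by
  have hr0 : 0 ≤ 2 * |x| / π := by positivity
  have hr1 : 2 * |x| / π < 1 := by
    rw [div_lt_one pi_pos]
    linarith
  refine Summable.of_nonneg_of_le (fun n => _root_.abs_nonneg _) (fun n => ?_)
    ((summable_geometric_of_lt_one hr0 hr1).mul_left (8/π))
  calc |tanC n * x^n| = |tanC n| * |x|^n := by rw [_root_.abs_mul, _root_.abs_pow]
    _ ≤ 4 * (2/π)^(n+1) * |x|^n :=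
        mul_le_mul_of_nonneg_right (tanC_bound n) (pow_nonneg (_root_.abs_nonneg x) n)
    _ = 8/π * (2*|x|/π)^n := by
        rw [pow_succ, show 2*|x|/π = 2/π*|x| by ring, mul_pow]
        ring

open Real in
lemma summable_cos_abs (x : ℝ) : Summable fun n : ℕ => |cosC n * x ^ n| := by
  refine Summable.of_nonneg_of_le (fun n => _root_.abs_nonneg _) (fun n => ?_)
    (Real.summable_pow_div_factorial |x|)
  rw [_root_.abs_mul, _root_.abs_pow]
  have hc : |cosC n| ≤ 1 / (Nat.factorial n : ℝ) := by
    rw [cosC]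
    split
    · rw [_root_.abs_div, _root_.abs_pow, _root_.abs_neg, abs_one, one_pow, _root_.abs_of_nonneg
        (by positivity : (0:ℝ) ≤ (Nat.factorial n : ℝ))]
    · rw [abs_zero]
      positivity
  calc |cosC n| * |x|^n ≤ (1 / (Nat.factorial n : ℝ)) * |x|^n :=
        mul_le_mul_of_nonneg_right hc (pow_nonneg (_root_.abs_nonneg x) n)
    _ = |x|^n / (Nat.factorial n : ℝ) := by ring

open Real in
lemma hasSum_cos_full (x : ℝ) : HasSum (fun n : ℕ => cosC n * x ^ n) (Real.cos x) := by
  have hinj : Function.Injective (fun k : ℕ => 2 * k) := by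
    intro a b hab
    have : 2 * a = 2 * b := hab
    omega
  have h0 : ∀ n ∉ Set.range (fun k : ℕ => 2 * k), cosC n * x ^ n = 0 := by
    intro n hn
    have hne : ¬ Even n := by
      rintro ⟨k, hk⟩
      exact hn ⟨k, show 2 * k = n by omega⟩
    rw [cosC, if_neg hne, zero_mul]
  refine (hinj.hasSum_iff h0).mp ?_
  refine (Real.hasSum_cos x).congr_fun fun k => ?_
  dsimp only [Function.comp_apply]
  rw [cosC, if_pos ⟨k, by omega⟩, Nat.mul_div_cancel_left k (by norm_num)]
  ring

open Real in
lemma hasSum_sin_full (x : ℝ) : HasSum (fun n : ℕ => sinC n * x ^ n) (Real.sin x) := by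
  have hinj : Function.Injective (fun k : ℕ => 2 * k + 1) := by
    intro a b hab
    have : 2 * a + 1 = 2 * b + 1 := hab
    omega
  have h0 : ∀ n ∉ Set.range (fun k : ℕ => 2 * k + 1), sinC n * x ^ n = 0 := by
    intro n hn
    have hne : Even n := by
      rcases Nat.even_or_odd n with he | ⟨k, hk⟩
      · exact he
      · exact absurd ⟨k, show 2 * k + 1 = n by omega⟩ hn
    rw [sinC, if_pos hne, zero_mul]
  refine (hinj.hasSum_iff h0).mp ?_
  refine (Real.hasSum_sin x).congr_fun fun k => ?_
  dsimp only [Function.comp_apply]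
  rw [sinC, if_neg (by simpa using Nat.not_even_iff_odd.mpr ⟨k, rfl⟩),
    show (2*k+1)/2 = k by omega]
  ring

lemma tanC_eq (k : ℕ) : tanC (2*k+1) =
    (-4 : ℝ) ^ (k + 1) * (1 - (4 : ℝ) ^ (k + 1)) * ((bernoulli (2 * k + 2) : ℚ) : ℝ)
      / (Nat.factorial (2 * k + 2) : ℝ) := by
  rw [tanC, if_neg (by simpa using Nat.not_even_iff_odd.mpr ⟨k, rfl⟩),
    show 2*k+1+1 = 2*k+2 by omega, show (2*k+2)/2 = k+1 by omega]

end TanTaylorAux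

/-- For `|x| < π/2`, the tangent admits the absolutely convergent Taylor series
`tan x = Σ_{k=0}^{∞} a_{2k+1} · x^{2k+1}` where
`a_{2k+1} = (−4)^{k+1} · (1 − 4^{k+1}) · B_{2k+2} / (2k+2)!`. -/
theorem tan_taylor_series (x : ℝ) (h : |x| < π / 2) :
    (Summable fun k : ℕ =>
      |((-4 : ℝ) ^ (k + 1) * (1 - (4 : ℝ) ^ (k + 1)) * ((bernoulli (2 * k + 2) : ℚ) : ℝ)
        / (Nat.factorial (2 * k + 2) : ℝ)) * x ^ (2 * k + 1)|) ∧
    HasSum (fun k : ℕ =>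
      ((-4 : ℝ) ^ (k + 1) * (1 - (4 : ℝ) ^ (k + 1)) * ((bernoulli (2 * k + 2) : ℚ) : ℝ)
        / (Nat.factorial (2 * k + 2) : ℝ)) * x ^ (2 * k + 1))
      (Real.tan x) := by
  have hf := summable_tan_abs x h
  have hg := summable_cos_abs x
  have hinj : Function.Injective (fun k : ℕ => 2 * k + 1) := by
    intro a b hab
    have : 2 * a + 1 = 2 * b + 1 := hab
    omega
  have hfull : HasSum (fun n : ℕ => tanC n * x ^ n) (Real.tan x) := by
    have hT : HasSum (fun n : ℕ => tanC n * x ^ n) (∑' n : ℕ, tanC n * x ^ n) :=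
      hf.of_abs.hasSum
    have hprod := tsum_mul_tsum_eq_tsum_sum_antidiagonal_of_summable_norm
      (f := fun n : ℕ => tanC n * x ^ n) (g := fun n : ℕ => cosC n * x ^ n)
      (by simpa only [Real.norm_eq_abs] using hf) (by simpa only [Real.norm_eq_abs] using hg)
    have hinner : ∀ n : ℕ, ∑ p ∈ Finset.HasAntidiagonal.antidiagonal n,
        (tanC p.1 * x ^ p.1) * (cosC p.2 * x ^ p.2) = sinC n * x ^ n := by
      intro n
      rw [← coeffId n, Finset.sum_mul]
      refine Finset.sum_congr rfl fun p hp => ?_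
      rw [Finset.HasAntidiagonal.mem_antidiagonal] at hp
      rw [← hp, pow_add]
      ring
    rw [(hasSum_cos_full x).tsum_eq] at hprod
    simp_rw [hinner] at hprod
    rw [(hasSum_sin_full x).tsum_eq] at hprod
    have hcosne : Real.cos x ≠ 0 := by
      have hx := abs_lt.mp h
      exact ne_of_gt (Real.cos_pos_of_mem_Ioo ⟨by linarith [hx.1], hx.2⟩)
    have hTval : (∑' n : ℕ, tanC n * x ^ n) = Real.tan x := by
      rw [Real.tan_eq_sin_div_cos, ← hprod]
      field_simp
    rwa [hTval] at hT
  constructor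
  · refine (hf.comp_injective hinj).congr fun k => ?_
    dsimp only [Function.comp_apply]
    rw [tanC_eq k]
  · have h0 : ∀ n ∉ Set.range (fun k : ℕ => 2 * k + 1), tanC n * x ^ n = 0 := by
      intro n hn
      have he : Even n := by
        rcases Nat.even_or_odd n with he | ⟨k, hk⟩
        · exact he
        · exact absurd ⟨k, show 2 * k + 1 = n by omega⟩ hn
      rw [tanC, if_pos he, zero_mul]
    refine ((hinj.hasSum_iff h0).mpr hfull).congr_fun fun k => ?_
    dsimp only [Function.comp_apply]
    rw [tanC_eq k]
end

section
/- There exists a universal constant C > 0 such that for every real s > 0 and every positive integer N with 2s < N, the series Σ_{k=0}^{∞} |B_{2k+2}| · (2πs)^{2k−1} / ( (2k+2)! · N^{2k} ) converges and is at most C · N² / ( s · (N² − 4s²) ). -/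
open Real

lemma bern_abs_bound (k : ℕ) (hk : k ≠ 0) :
    |((bernoulli (2 * k) : ℚ) : ℝ)| ≤ 4 * ((2 * k).factorial : ℝ) / (2 * π) ^ (2 * k) := by
  set B : ℝ := ((bernoulli (2 * k) : ℚ) : ℝ) with hB
  set F : ℝ := ((2 * k).factorial : ℝ) with hF
  have hFpos : (0 : ℝ) < F := by positivity
  have hS := hasSum_zeta_nat hk
  have hnn : 0 ≤ (-1 : ℝ) ^ (k + 1) * (2 : ℝ) ^ (2 * k - 1) * π ^ (2 * k) * B / F :=
    hS.nonneg (fun n => by positivity)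
  have hle : (-1 : ℝ) ^ (k + 1) * (2 : ℝ) ^ (2 * k - 1) * π ^ (2 * k) * B / F ≤ π ^ 2 / 6 := by
    refine hasSum_le (fun n => ?_) hS hasSum_zeta_two
    rcases Nat.eq_zero_or_pos n with h | h
    · subst h
      simp [zero_pow, Nat.mul_ne_zero two_ne_zero hk]
    · have h1 : (1 : ℝ) ≤ (n : ℝ) := by exact_mod_cast h
      exact one_div_le_one_div_of_le (by positivity) (pow_le_pow_right₀ h1 (by omega))
  have h2 : |(-1 : ℝ) ^ (k + 1) * (2 : ℝ) ^ (2 * k - 1) * π ^ (2 * k) * B / F| =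
      (2 : ℝ) ^ (2 * k - 1) * π ^ (2 * k) * |B| / F := by
    rw [abs_div, abs_mul, abs_mul, abs_mul, abs_pow, abs_neg, abs_one, one_pow, one_mul,
      abs_pow, abs_pow, abs_two, abs_of_nonneg pi_pos.le, abs_of_nonneg hFpos.le]
  have hpi : π ^ 2 / 6 ≤ 2 := by nlinarith [pi_lt_d2, pi_pos]
  have habs : (2 : ℝ) ^ (2 * k - 1) * π ^ (2 * k) * |B| / F ≤ 2 := by
    calc (2 : ℝ) ^ (2 * k - 1) * π ^ (2 * k) * |B| / F
        = |(-1 : ℝ) ^ (k + 1) * (2 : ℝ) ^ (2 * k - 1) * π ^ (2 * k) * B / F| := h2.symm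
      _ = _ := abs_of_nonneg hnn
      _ ≤ π ^ 2 / 6 := hle
      _ ≤ 2 := hpi
  have h2k : (2 : ℝ) ^ (2 * k - 1) = 2 ^ (2 * k) / 2 := by
    rw [eq_div_iff (two_ne_zero' ℝ), ← pow_succ]
    congr 1
    omega
  rw [h2k] at habs
  have hpik : (0 : ℝ) < (2 * π) ^ (2 * k) := by positivity
  rw [mul_pow]
  rw [div_le_iff₀ hFpos] at habs
  rw [le_div_iff₀ (by positivity : (0:ℝ) < 2 ^ (2*k) * π ^ (2*k))]
  nlinarith [abs_nonneg B]

/-- There is a universal constant `C > 0` such that for every real `s > 0` and every positive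
integer `N` with `2s < N`, the series
`Σ_{k} |B_{2k+2}| · (2πs)^{2k−1} / ((2k+2)! · N^{2k})` (with `(2πs)^{-1} = 1/(2πs)` at `k = 0`,
via integer powers) converges and is at most `C · N² / (s · (N² − 4s²))`. -/
theorem so_cot_series_bound :
    ∃ C : ℝ, 0 < C ∧ ∀ s : ℝ, 0 < s → ∀ N : ℕ, 0 < N → 2 * s < N →
      (Summable fun k : ℕ =>
        |((bernoulli (2 * k + 2) : ℚ) : ℝ)| * (2 * π * s) ^ (2 * (k : ℤ) - 1)
          / ((Nat.factorial (2 * k + 2) : ℝ) * (N : ℝ) ^ (2 * k))) ∧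
      (∑' k : ℕ,
        |((bernoulli (2 * k + 2) : ℚ) : ℝ)| * (2 * π * s) ^ (2 * (k : ℤ) - 1)
          / ((Nat.factorial (2 * k + 2) : ℝ) * (N : ℝ) ^ (2 * k)))
        ≤ C * (N : ℝ) ^ 2 / (s * ((N : ℝ) ^ 2 - 4 * s ^ 2)) := by
  refine ⟨1, one_pos, fun s hs N hN hsN => ?_⟩
  have hNpos : (0 : ℝ) < N := by exact_mod_cast hN
  have ha : (0 : ℝ) < 2 * π * s := by positivity
  set f : ℕ → ℝ := fun k =>
    |((bernoulli (2 * k + 2) : ℚ) : ℝ)| * (2 * π * s) ^ (2 * (k : ℤ) - 1)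
      / ((Nat.factorial (2 * k + 2) : ℝ) * (N : ℝ) ^ (2 * k)) with hf
  set r : ℝ := (s / N) ^ 2 with hrdef
  have hr0 : 0 ≤ r := by positivity
  have hsN' : s / N < 1 / 2 := by
    rw [div_lt_div_iff₀ hNpos two_pos]; linarith
  have hr1 : r < 1 := by
    have : s / N < 1 := lt_trans hsN' (by norm_num)
    nlinarith [div_pos hs hNpos]
  set g : ℕ → ℝ := fun k => (1 / (2 * π ^ 3 * s)) * r ^ k with hg
  have hf0 : ∀ k, 0 ≤ f k := fun k => by
    have := ha
    positivity
  have hfg : ∀ k, f k ≤ g k := by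
    intro k
    have hb := bern_abs_bound (k + 1) (Nat.succ_ne_zero k)
    have hb' : |((bernoulli (2 * k + 2) : ℚ) : ℝ)| ≤
        4 * ((Nat.factorial (2 * k + 2) : ℝ)) / (2 * π) ^ (2 * k + 2) := by
      simpa [show 2 * (k + 1) = 2 * k + 2 by ring] using hb
    have hz : (2 * π * s) ^ (2 * (k : ℤ) - 1) = (2 * π * s) ^ (2 * k) / (2 * π * s) := by
      rw [show 2 * (k : ℤ) - 1 = ((2 * k : ℕ) : ℤ) + (-1) by push_cast; ring,
        zpow_add₀ ha.ne', zpow_natCast, zpow_neg_one, div_eq_mul_inv]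
    have hFpos : (0 : ℝ) < (Nat.factorial (2 * k + 2) : ℝ) := by positivity
    have step1 : f k ≤ (4 * ((Nat.factorial (2 * k + 2) : ℝ)) / (2 * π) ^ (2 * k + 2)) *
        ((2 * π * s) ^ (2 * k) / (2 * π * s)) / ((Nat.factorial (2 * k + 2) : ℝ) * (N : ℝ) ^ (2 * k)) := by
      simp only [hf, hz]
      gcongr
    refine le_trans step1 (le_of_eq ?_)
    have hrk : r ^ k = s ^ (2 * k) / (N : ℝ) ^ (2 * k) := by
      rw [hrdef, ← pow_mul, div_pow]
    simp only [hg, hrk]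
    have hπ : π ≠ 0 := pi_pos.ne'
    field_simp
    ring
  have hgsum : Summable g := (summable_geometric_of_lt_one hr0 hr1).mul_left _
  have hfsum : Summable f := Summable.of_nonneg_of_le hf0 hfg hgsum
  refine ⟨hfsum, ?_⟩
  have h4 : 4 * s ^ 2 < (N : ℝ) ^ 2 := by nlinarith
  have hden : (0 : ℝ) < (N : ℝ) ^ 2 - 4 * s ^ 2 := by linarith
  have hden2 : (0 : ℝ) < (N : ℝ) ^ 2 - s ^ 2 := by nlinarith
  calc (∑' k, f k) ≤ ∑' k, g k := Summable.tsum_le_tsum hfg hfsum hgsum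
    _ = (1 / (2 * π ^ 3 * s)) * (1 - r)⁻¹ := by
        rw [hg, tsum_mul_left, tsum_geometric_of_lt_one hr0 hr1]
    _ ≤ 1 * (N : ℝ) ^ 2 / (s * ((N : ℝ) ^ 2 - 4 * s ^ 2)) := by
        have h1r : 1 - r = ((N : ℝ) ^ 2 - s ^ 2) / (N : ℝ) ^ 2 := by
          rw [hrdef]; field_simp
        have hinv : (((N : ℝ) ^ 2 - s ^ 2) / (N : ℝ) ^ 2)⁻¹ =
            (N : ℝ) ^ 2 / ((N : ℝ) ^ 2 - s ^ 2) := by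
          rw [inv_div]
        rw [h1r, one_mul, hinv, div_mul_div_comm,
          div_le_div_iff₀ (by positivity) (by positivity)]
        have h3 : (3 : ℝ) ≤ π := pi_gt_three.le
        have h27 : (27 : ℝ) ≤ π ^ 3 := by
          calc (27 : ℝ) = 3 ^ 3 := by norm_num
            _ ≤ π ^ 3 := pow_le_pow_left₀ (by norm_num) h3 3
        have key : (N : ℝ) ^ 2 - 4 * s ^ 2 ≤ 2 * π ^ 3 * ((N : ℝ) ^ 2 - s ^ 2) := by
          nlinarith
        nlinarith [mul_le_mul_of_nonneg_left key (by positivity : (0:ℝ) ≤ s * (N:ℝ) ^ 2)]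
end

section
/- There exists a universal constant C > 0 such that for every real s > 0 and every positive integer N with 2s < N, the series Σ_{k=0}^{∞} 4^{k+1} · (4^{k+1} − 1) · |B_{2k+2}| · (2πs)^{2k+1} / ( (2k+2)! · (2N)^{2k+1} ) converges and is at most C · s · N / (N² − 4s²). -/
open Real

lemma zeta_even_le_two (k : ℕ) : (∑' n : ℕ, 1 / (n : ℝ) ^ (2 * (k + 1))) ≤ 2 := by
  have h2 := hasSum_zeta_two
  have hsum2 : Summable fun n : ℕ => 1 / (n : ℝ) ^ 2 := h2.summable
  have hle : ∀ n : ℕ, 1 / (n : ℝ) ^ (2 * (k + 1)) ≤ 1 / (n : ℝ) ^ 2 := by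
    intro n
    rcases Nat.eq_zero_or_pos n with hn | hn
    · subst hn; simp
    · have h1 : (1 : ℝ) ≤ (n : ℝ) := by exact_mod_cast hn
      have : (n : ℝ) ^ 2 ≤ (n : ℝ) ^ (2 * (k + 1)) := pow_le_pow_right₀ h1 (by omega)
      exact one_div_le_one_div_of_le (by positivity) this
  have hsum : Summable fun n : ℕ => 1 / (n : ℝ) ^ (2 * (k + 1)) :=
    Summable.of_nonneg_of_le (fun n => by positivity) hle hsum2
  calc (∑' n : ℕ, 1 / (n : ℝ) ^ (2 * (k + 1))) ≤ ∑' n : ℕ, 1 / (n : ℝ) ^ 2 :=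
        Summable.tsum_le_tsum hle hsum hsum2
    _ = π ^ 2 / 6 := h2.tsum_eq
    _ ≤ 2 := by nlinarith [pi_lt_d2, pi_pos]

lemma bernoulli_abs_le (k : ℕ) :
    |((bernoulli (2 * k + 2) : ℚ) : ℝ)| ≤
      2 * (Nat.factorial (2 * k + 2) : ℝ) / (2 ^ (2 * k + 1) * π ^ (2 * k + 2)) := by
  have h := hasSum_zeta_nat (k := k + 1) (Nat.succ_ne_zero k)
  have hV0 : (0 : ℝ) ≤ (-1 : ℝ) ^ (k + 1 + 1) * (2 : ℝ) ^ (2 * (k + 1) - 1) * π ^ (2 * (k + 1)) *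
      ((bernoulli (2 * (k + 1)) : ℚ) : ℝ) / (Nat.factorial (2 * (k + 1)) : ℝ) := by
    rw [← h.tsum_eq]; exact tsum_nonneg fun n => by positivity
  have hV2 : (-1 : ℝ) ^ (k + 1 + 1) * (2 : ℝ) ^ (2 * (k + 1) - 1) * π ^ (2 * (k + 1)) *
      ((bernoulli (2 * (k + 1)) : ℚ) : ℝ) / (Nat.factorial (2 * (k + 1)) : ℝ) ≤ 2 := by
    rw [← h.tsum_eq]; exact zeta_even_le_two k
  have he1 : 2 * (k + 1) - 1 = 2 * k + 1 := by omega
  have he2 : 2 * (k + 1) = 2 * k + 2 := by omega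
  rw [he1, he2] at hV0 hV2
  have hfac : (0 : ℝ) < (Nat.factorial (2 * k + 2) : ℝ) := by positivity
  have hpos : (0 : ℝ) < (2 : ℝ) ^ (2 * k + 1) * π ^ (2 * k + 2) := by positivity
  have h1 : |(-1 : ℝ) ^ (k + 1 + 1) * (2 : ℝ) ^ (2 * k + 1) * π ^ (2 * k + 2) *
      ((bernoulli (2 * k + 2) : ℚ) : ℝ) / (Nat.factorial (2 * k + 2) : ℝ)| ≤ 2 :=
    abs_le.2 ⟨by linarith, hV2⟩
  have heq : |(-1 : ℝ) ^ (k + 1 + 1) * (2 : ℝ) ^ (2 * k + 1) * π ^ (2 * k + 2) *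
      ((bernoulli (2 * k + 2) : ℚ) : ℝ) / (Nat.factorial (2 * k + 2) : ℝ)|
      = (2 : ℝ) ^ (2 * k + 1) * π ^ (2 * k + 2) * |((bernoulli (2 * k + 2) : ℚ) : ℝ)| /
        (Nat.factorial (2 * k + 2) : ℝ) := by
    rw [abs_div, abs_mul, abs_mul, abs_mul, abs_pow, abs_neg, abs_one, one_pow, one_mul,
      abs_of_nonneg (le_of_lt (by positivity : (0:ℝ) < (2:ℝ) ^ (2*k+1))),
      abs_of_nonneg (le_of_lt (by positivity : (0:ℝ) < π ^ (2*k+2))),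
      abs_of_nonneg hfac.le]
  rw [heq, div_le_iff₀ hfac] at h1
  rw [le_div_iff₀ hpos]
  calc |((bernoulli (2 * k + 2) : ℚ) : ℝ)| * ((2 : ℝ) ^ (2 * k + 1) * π ^ (2 * k + 2))
      = (2 : ℝ) ^ (2 * k + 1) * π ^ (2 * k + 2) * |((bernoulli (2 * k + 2) : ℚ) : ℝ)| := by ring
    _ ≤ 2 * (Nat.factorial (2 * k + 2) : ℝ) := h1

open Real

/-- There is a universal constant `C > 0` such that for every real `s > 0` and every positive
integer `N` with `2s < N`, the series
`Σ_{k} 4^{k+1} · (4^{k+1} − 1) · |B_{2k+2}| · (2πs)^{2k+1} / ((2k+2)! · (2N)^{2k+1})`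
converges and is at most `C · s · N / (N² − 4s²)`. -/
theorem so_tan_series_bound :
    ∃ C : ℝ, 0 < C ∧ ∀ s : ℝ, 0 < s → ∀ N : ℕ, 0 < N → 2 * s < N →
      (Summable fun k : ℕ =>
        (4 : ℝ) ^ (k + 1) * ((4 : ℝ) ^ (k + 1) - 1) * |((bernoulli (2 * k + 2) : ℚ) : ℝ)|
          * (2 * π * s) ^ (2 * k + 1)
          / ((Nat.factorial (2 * k + 2) : ℝ) * (2 * (N : ℝ)) ^ (2 * k + 1))) ∧
      (∑' k : ℕ,
        (4 : ℝ) ^ (k + 1) * ((4 : ℝ) ^ (k + 1) - 1) * |((bernoulli (2 * k + 2) : ℚ) : ℝ)|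
          * (2 * π * s) ^ (2 * k + 1)
          / ((Nat.factorial (2 * k + 2) : ℝ) * (2 * (N : ℝ)) ^ (2 * k + 1)))
        ≤ C * s * (N : ℝ) / ((N : ℝ) ^ 2 - 4 * s ^ 2) := by
  refine ⟨16, by norm_num, fun s hs N hN hsN => ?_⟩
  have hπ := pi_pos
  have hN' : (0 : ℝ) < (N : ℝ) := by exact_mod_cast hN
  set x : ℝ := s / N with hx
  have hx0 : 0 < x := div_pos hs hN'
  have hxh : x < 1 / 2 := by
    rw [hx, div_lt_div_iff₀ hN' (by norm_num)]
    linarith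
  have hr0 : (0 : ℝ) ≤ 4 * x ^ 2 := by positivity
  have hr1 : 4 * x ^ 2 < 1 := by nlinarith
  -- per-term bound
  have key : ∀ k : ℕ,
      (4 : ℝ) ^ (k + 1) * ((4 : ℝ) ^ (k + 1) - 1) * |((bernoulli (2 * k + 2) : ℚ) : ℝ)|
        * (2 * π * s) ^ (2 * k + 1)
        / ((Nat.factorial (2 * k + 2) : ℝ) * (2 * (N : ℝ)) ^ (2 * k + 1))
      ≤ (16 / π) * x * (4 * x ^ 2) ^ k := by
    intro k
    have hF : (0 : ℝ) < (Nat.factorial (2 * k + 2) : ℝ) := by positivity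
    have hB := bernoulli_abs_le k
    have h41 : (4 : ℝ) ^ (k + 1) - 1 ≤ (4 : ℝ) ^ (k + 1) := by linarith
    have h40 : (0 : ℝ) ≤ (4 : ℝ) ^ (k + 1) - 1 := by
      have : (1 : ℝ) ≤ (4 : ℝ) ^ (k + 1) := one_le_pow₀ (by norm_num)
      linarith
    calc (4 : ℝ) ^ (k + 1) * ((4 : ℝ) ^ (k + 1) - 1) * |((bernoulli (2 * k + 2) : ℚ) : ℝ)|
          * (2 * π * s) ^ (2 * k + 1)
          / ((Nat.factorial (2 * k + 2) : ℝ) * (2 * (N : ℝ)) ^ (2 * k + 1))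
        ≤ (4 : ℝ) ^ (k + 1) * (4 : ℝ) ^ (k + 1)
            * (2 * (Nat.factorial (2 * k + 2) : ℝ) / (2 ^ (2 * k + 1) * π ^ (2 * k + 2)))
            * (2 * π * s) ^ (2 * k + 1)
            / ((Nat.factorial (2 * k + 2) : ℝ) * (2 * (N : ℝ)) ^ (2 * k + 1)) := by
          gcongr
        _ = (16 / π) * x * (4 * x ^ 2) ^ k := by
          have hr : ((4:ℝ) * x ^ 2) ^ k = 2 ^ (2 * k) * x ^ (2 * k) := by
            rw [mul_pow, show ((4:ℝ)) = 2 ^ 2 by norm_num, ← pow_mul, ← pow_mul]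
          rw [hr, hx, show ((4:ℝ)) = 2 ^ 2 by norm_num, show ((16:ℝ)) = 2 ^ 4 by norm_num,
            ← pow_mul, div_pow]
          field_simp
          ring
  have hg : Summable fun k : ℕ => (16 / π) * x * (4 * x ^ 2) ^ k :=
    (summable_geometric_of_lt_one hr0 hr1).mul_left _
  have hnn : ∀ k : ℕ, (0 : ℝ) ≤
      (4 : ℝ) ^ (k + 1) * ((4 : ℝ) ^ (k + 1) - 1) * |((bernoulli (2 * k + 2) : ℚ) : ℝ)|
        * (2 * π * s) ^ (2 * k + 1)
        / ((Nat.factorial (2 * k + 2) : ℝ) * (2 * (N : ℝ)) ^ (2 * k + 1)) := by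
    intro k
    have h40 : (0 : ℝ) ≤ (4 : ℝ) ^ (k + 1) - 1 := by
      have : (1 : ℝ) ≤ (4 : ℝ) ^ (k + 1) := one_le_pow₀ (by norm_num)
      linarith
    positivity
  have hsummable := Summable.of_nonneg_of_le hnn key hg
  refine ⟨hsummable, ?_⟩
  have htsum_le : (∑' k : ℕ,
      (4 : ℝ) ^ (k + 1) * ((4 : ℝ) ^ (k + 1) - 1) * |((bernoulli (2 * k + 2) : ℚ) : ℝ)|
        * (2 * π * s) ^ (2 * k + 1)
        / ((Nat.factorial (2 * k + 2) : ℝ) * (2 * (N : ℝ)) ^ (2 * k + 1)))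
      ≤ ∑' k : ℕ, (16 / π) * x * (4 * x ^ 2) ^ k :=
    Summable.tsum_le_tsum key hsummable hg
  have htg : (∑' k : ℕ, (16 / π) * x * (4 * x ^ 2) ^ k)
      = (16 / π) * x * (1 - 4 * x ^ 2)⁻¹ := by
    rw [tsum_mul_left, tsum_geometric_of_lt_one hr0 hr1]
  have hden : (0 : ℝ) < (N : ℝ) ^ 2 - 4 * s ^ 2 := by nlinarith
  have h1r : (0 : ℝ) < 1 - 4 * x ^ 2 := by linarith
  have heq : x * (1 - 4 * x ^ 2)⁻¹ = s * (N : ℝ) / ((N : ℝ) ^ 2 - 4 * s ^ 2) := by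
    rw [hx]
    field_simp
  have hfinal : (16 / π) * x * (1 - 4 * x ^ 2)⁻¹ ≤ 16 * s * (N : ℝ) / ((N : ℝ) ^ 2 - 4 * s ^ 2) := by
    have hX : (0 : ℝ) ≤ s * (N : ℝ) / ((N : ℝ) ^ 2 - 4 * s ^ 2) := by positivity
    have h16 : (16 : ℝ) / π ≤ 16 := by
      rw [div_le_iff₀ hπ]
      nlinarith [pi_gt_three]
    calc (16 / π) * x * (1 - 4 * x ^ 2)⁻¹ = (16 / π) * (x * (1 - 4 * x ^ 2)⁻¹) := by ring
      _ = (16 / π) * (s * (N : ℝ) / ((N : ℝ) ^ 2 - 4 * s ^ 2)) := by rw [heq]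
      _ ≤ 16 * (s * (N : ℝ) / ((N : ℝ) ^ 2 - 4 * s ^ 2)) :=
          mul_le_mul_of_nonneg_right h16 hX
      _ = 16 * s * (N : ℝ) / ((N : ℝ) ^ 2 - 4 * s ^ 2) := by ring
  calc _ ≤ ∑' k : ℕ, (16 / π) * x * (4 * x ^ 2) ^ k := htsum_le
    _ = (16 / π) * x * (1 - 4 * x ^ 2)⁻¹ := htg
    _ ≤ 16 * s * (N : ℝ) / ((N : ℝ) ^ 2 - 4 * s ^ 2) := hfinal
end
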